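/- arXiv:1307.0189 — 9 statements merged into one kernel-verified Lean document; each statement's English description precedes it below -/
import Mathlib

section
/- If a sequence (s_n) of complex numbers is B-rational (its orbit under the B-multisection operators T_r s = (s_{Bn+r})_n spans a finite-dimensional vector space), then the sequence of backward differences u_n = s_n − s_{n−1} (with s_{−1} = 0) is also B-rational. Conversely, if (u_n) is B-rational then the sequence of partial sums s_n = u_0 + u_1 + ... + u_n is B-rational. -/
open Finset

/-- The delay operator: `(Dop f) n = f (n-1)` with `(Dop f) 0 = 0`. -/
noncomputable def Dop : (ℕ → ℂ) →ₗ[ℂ] (ℕ → ℂ) where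
  toFun f := fun n => if n = 0 then 0 else f (n - 1)
  map_add' f g := by funext n; by_cases h : n = 0 <;> simp [h]
  map_smul' c f := by funext n; by_cases h : n = 0 <;> simp [h]

/-- The partial-sum operator. -/
noncomputable def Sop : (ℕ → ℂ) →ₗ[ℂ] (ℕ → ℂ) where
  toFun f := fun n => ∑ k ∈ Finset.range (n + 1), f k
  map_add' f g := by funext n; simp [Finset.sum_add_distrib]
  map_smul' c f := by funext n; simp [Finset.mul_sum]

lemma Dop_apply (f : ℕ → ℂ) (n : ℕ) : Dop f n = if n = 0 then 0 else f (n - 1) := rfl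

lemma Sop_apply (f : ℕ → ℂ) (n : ℕ) : Sop f n = ∑ k ∈ Finset.range (n + 1), f k := rfl

lemma block_sum (B : ℕ) (h : ℕ → ℂ) (n : ℕ) :
    ∑ j ∈ range n, ∑ i ∈ range B, h (B * j + i) = ∑ k ∈ range (B * n), h k := by
  induction n with
  | zero => simp
  | succ n ih =>
    rw [Finset.sum_range_succ, ih, show B * (n + 1) = B * n + B by ring,
      Finset.sum_range_add]

lemma Sop_key (B : ℕ) (h : ℕ → ℂ) (r : ℕ) (hr : r < B) (n : ℕ) :
    Sop h (B * n + r) =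
      Sop (fun m => ∑ i ∈ range B, h (B * m + i)) n - ∑ i ∈ Ico (r + 1) B, h (B * n + i) := by
  have e1 : B * (n + 1) = (B * n + r + 1) + (B - (r + 1)) := by rw [Nat.mul_succ]; omega
  rw [Sop_apply, Sop_apply, block_sum]
  conv_rhs => rw [e1, Finset.sum_range_add, Finset.sum_Ico_eq_sum_range]
  have e2 : ∀ i, h (B * n + r + 1 + i) = h (B * n + (r + 1 + i)) := by
    intro i; congr 1; omega
  simp only [e2]
  ring

lemma sum_mem_stable (B : ℕ) (V : Submodule ℂ (ℕ → ℂ))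
    (hV : ∀ r < B, ∀ f ∈ V, (fun n => f (B * n + r)) ∈ V)
    (h : ℕ → ℂ) (hh : h ∈ V) (t : Finset ℕ) (ht : ∀ i ∈ t, i < B) :
    (fun n => ∑ i ∈ t, h (B * n + i)) ∈ V := by
  have e : (fun n => ∑ i ∈ t, h (B * n + i)) = ∑ i ∈ t, (fun n => h (B * n + i)) := by
    funext n; simp
  rw [e]
  exact Submodule.sum_mem _ fun i hi => hV i (ht i hi) h hh

/-- A sequence is `B`-rational if it lies in a finite-dimensional space of sequences
stable under all multisection operators `T_r s = (s_{Bn+r})_n`, `0 ≤ r < B`. -/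
def BRational (B : ℕ) (s : ℕ → ℂ) : Prop :=
  ∃ V : Submodule ℂ (ℕ → ℂ), FiniteDimensional ℂ V ∧ s ∈ V ∧
    ∀ r < B, ∀ f ∈ V, (fun n => f (B * n + r)) ∈ V

/-- backward differences of a `B`-rational sequence are `B`-rational,
and partial sums of a `B`-rational sequence are `B`-rational. -/
theorem bRational_backward_diff_and_partial_sums (B : ℕ) (hB : 2 ≤ B) :
    (∀ s : ℕ → ℂ, BRational B s →
      BRational B (fun n => s n - if n = 0 then 0 else s (n - 1))) ∧
    (∀ u : ℕ → ℂ, BRational B u →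
      BRational B (fun n => ∑ k ∈ Finset.range (n + 1), u k)) := by
  constructor
  · rintro s ⟨V, hfin, hs, hstab⟩
    refine ⟨V ⊔ V.map Dop, ?_, ?_, ?_⟩
    · haveI : FiniteDimensional ℂ (V.map Dop) := Module.Finite.map V Dop
      infer_instance
    · have h1 : s ∈ V ⊔ V.map Dop := Submodule.mem_sup_left hs
      have h2 : Dop s ∈ V ⊔ V.map Dop := Submodule.mem_sup_right ⟨s, hs, rfl⟩
      have e : (fun n => s n - if n = 0 then 0 else s (n - 1)) = s - Dop s := by
        funext n; simp [Dop_apply]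
      rw [e]
      exact Submodule.sub_mem _ h1 h2
    · intro r hr f hf
      obtain ⟨g, hg, m, hm, rfl⟩ := Submodule.mem_sup.1 hf
      obtain ⟨h, hh, rfl⟩ := hm
      have hgpart : (fun n => g (B * n + r)) ∈ V := hstab r hr g hg
      rcases Nat.eq_zero_or_pos r with hr0 | hr1
      · subst hr0
        have e : (fun n => (g + Dop h) (B * n + 0)) =
            (fun n => g (B * n + 0)) + Dop (fun n => h (B * n + (B - 1))) := by
          funext n
          cases n with
          | zero => simp [Dop_apply]
          | succ m =>
            have h1 : B * (m + 1) + 0 ≠ 0 := by positivity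
            have h2 : (m : ℕ) + 1 ≠ 0 := by omega
            simp only [Pi.add_apply, Dop_apply, if_neg h1, if_neg h2, Nat.add_sub_cancel]
            have e3 : B * (m + 1) + 0 - 1 = B * m + (B - 1) := by rw [Nat.mul_succ]; omega
            rw [e3]
        rw [e]
        exact Submodule.add_mem _ (Submodule.mem_sup_left hgpart)
          (Submodule.mem_sup_right ⟨_, hstab (B - 1) (by omega) h hh, rfl⟩)
      · have e : (fun n => (g + Dop h) (B * n + r)) =
            (fun n => g (B * n + r)) + (fun n => h (B * n + (r - 1))) := by
          funext n
          have h1 : B * n + r ≠ 0 := by omega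
          simp only [Pi.add_apply, Dop_apply, if_neg h1]
          congr 2
          omega
        rw [e]
        exact Submodule.mem_sup_left
          (Submodule.add_mem _ hgpart (hstab (r - 1) (by omega) h hh))
  · rintro u ⟨V, hfin, hu, hstab⟩
    refine ⟨V ⊔ V.map Sop, ?_, ?_, ?_⟩
    · haveI : FiniteDimensional ℂ (V.map Sop) := Module.Finite.map V Sop
      infer_instance
    · exact Submodule.mem_sup_right ⟨u, hu, rfl⟩
    · intro r hr f hf
      obtain ⟨g, hg, m, hm, rfl⟩ := Submodule.mem_sup.1 hf
      obtain ⟨h, hh, rfl⟩ := hm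
      set g' : ℕ → ℂ := fun m => ∑ i ∈ range B, h (B * m + i) with hg'
      set c : ℕ → ℂ := fun n => ∑ i ∈ Ico (r + 1) B, h (B * n + i) with hc
      have hg'mem : g' ∈ V := sum_mem_stable B V hstab h hh _ (fun i hi => mem_range.1 hi)
      have hcmem : c ∈ V := sum_mem_stable B V hstab h hh _ (fun i hi => (mem_Ico.1 hi).2)
      have e : (fun n => (g + Sop h) (B * n + r)) =
          ((fun n => g (B * n + r)) - c) + Sop g' := by
        funext n
        simp only [Pi.add_apply, Pi.sub_apply, Sop_key B h r hr n, hc]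
        ring
      rw [e]
      exact Submodule.add_mem _
        (Submodule.mem_sup_left (Submodule.sub_mem _ (hstab r hr g hg) hcmem))
        (Submodule.mem_sup_right ⟨g', hg'mem, rfl⟩)
end

section
/- Let (L, (A_b)_{0≤b<B}, C) be a linear representation with Q = A_0 + ... + A_{B−1}, and let Σ_K(x) = Σ_{|w|=K, .w ≤ x} A_w C. Then for every x in [0,1) with B-ary expansion x = 0.x_1 x_2 x_3..., the recursion Σ_{K+1}(x) = Σ_{b < x_1} A_b Q^K C + A_{x_1} Σ_K(Bx − x_1) holds. -/
/-!
Splitting off the first letter of a word `w = b t` gives `.w = (b + .t) / B` and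
`A_w = A_b A_t`, hence `Σ_{K+1}(x) = ∑_b A_b Σ_K(Bx − b)`. Since `.t ∈ [0, 1)`, the term
`Σ_K(Bx − b)` is the full sum `Q^K C` when `b < x₁` and vanishes when `b > x₁`.
-/

open Matrix

theorem Fintype.sum_pi_fin_succ {α M : Type*} [Fintype α] [AddCommMonoid M] {K : ℕ}
    (f : (Fin (K + 1) → α) → M) :
    ∑ w, f w = ∑ a, ∑ t : Fin K → α, f (Fin.cons a t) := by
  rw [← (Fin.consEquiv fun _ => α).sum_comp, Fintype.sum_prod_type]
  rfl

namespace LinearRepresentation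

variable {B K : ℕ}

-- `digitValue B w`, `wordProd A w` and `partialSum B A C K` are the paper's `.w`, `A_w` and `Σ_K`.
noncomputable def digitValue (B : ℕ) (w : Fin K → Fin B) : ℝ :=
  ∑ i : Fin K, ((w i : ℕ) : ℝ) / (B : ℝ) ^ ((i : ℕ) + 1)

def wordProd {R : Type*} [Monoid R] (A : ℕ → R) (w : Fin K → Fin B) : R :=
  (List.ofFn fun i => A (w i)).prod

theorem digitValue_cons (b : Fin B) (t : Fin K → Fin B) :
    digitValue B (Fin.cons b t) = ((b : ℕ) + digitValue B t) / B := by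
  simp only [digitValue, Fin.sum_univ_succ, Fin.cons_zero, Fin.cons_succ, Fin.val_zero,
    Fin.val_succ, add_div, Finset.sum_div, div_div, pow_succ']
  ring_nf

theorem digitValue_nonneg (w : Fin K → Fin B) : 0 ≤ digitValue B w := by
  unfold digitValue; positivity

theorem digitValue_lt_one (w : Fin K → Fin B) : digitValue B w < 1 := by
  induction K with
  | zero => simp [digitValue]
  | succ K ih =>
    rw [← Fin.cons_self_tail w, digitValue_cons]
    have hb : ((w 0 : ℕ) : ℝ) + 1 ≤ B := by exact_mod_cast (w 0).isLt
    rw [div_lt_one (by linarith [Nat.cast_nonneg (α := ℝ) (w 0 : ℕ)])]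
    linarith [ih (Fin.tail w)]

theorem wordProd_cons {R : Type*} [Monoid R] (A : ℕ → R) (b : Fin B) (t : Fin K → Fin B) :
    wordProd A (Fin.cons b t) = A b * wordProd A t := by
  simp [wordProd, List.ofFn_succ]

theorem sum_wordProd {R : Type*} [Semiring R] (A : ℕ → R) (K : ℕ) :
    ∑ w : Fin K → Fin B, wordProd A w = (∑ b ∈ Finset.range B, A b) ^ K := by
  induction K with
  | zero => simp [wordProd]
  | succ K ih =>
    simp only [Fintype.sum_pi_fin_succ, wordProd_cons, ← Finset.mul_sum, ih, ← Finset.sum_mul,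
      pow_succ', Fin.sum_univ_eq_sum_range (fun b => A b)]

variable {n R : Type*} [Fintype n] [DecidableEq n] [Semiring R]

noncomputable def partialSum (B : ℕ) (A : ℕ → Matrix n n R) (C : n → R) (K : ℕ) (x : ℝ) :
    n → R :=
  ∑ w ∈ Finset.univ.filter (fun w : Fin K → Fin B => digitValue B w ≤ x), wordProd A w *ᵥ C

variable (A : ℕ → Matrix n n R) (C : n → R)

theorem partialSum_of_neg {x : ℝ} (hx : x < 0) : partialSum B A C K x = 0 := by
  refine Finset.sum_eq_zero fun w hw => ?_
  exact absurd (Finset.mem_filter.mp hw).2 (not_le.mpr (hx.trans_le (digitValue_nonneg w)))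

theorem partialSum_of_one_le {x : ℝ} (hx : 1 ≤ x) :
    partialSum B A C K x = (∑ b ∈ Finset.range B, A b) ^ K *ᵥ C := by
  rw [partialSum, Finset.filter_true_of_mem fun w _ => (digitValue_lt_one w).le.trans hx,
    ← sum_wordProd, Matrix.sum_mulVec]

theorem partialSum_succ (hB : 0 < B) (x : ℝ) :
    partialSum B A C (K + 1) x = ∑ b : Fin B, A b *ᵥ partialSum B A C K (B * x - b) := by
  have hBR : (0 : ℝ) < B := Nat.cast_pos.mpr hB
  simp only [partialSum, Finset.sum_filter, Fintype.sum_pi_fin_succ, Matrix.mulVec_sum,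
    digitValue_cons, wordProd_cons, div_le_iff₀' hBR, le_sub_iff_add_le']
  congr! 2 with b t
  split_ifs <;> simp [Matrix.mulVec_mulVec]

end LinearRepresentation

open LinearRepresentation in
/-- the basic recursion
`Σ_{K+1}(x) = Σ_{b < x₁} A_b Q^K C + A_{x₁} Σ_K(Bx − x₁)` where `x₁ = ⌊Bx⌋`. -/
theorem sigma_recursion
    (B d : ℕ) (hB : 2 ≤ B)
    (A : ℕ → Matrix (Fin d) (Fin d) ℂ) (C : Fin d → ℂ)
    (Q : Matrix (Fin d) (Fin d) ℂ) (hQ : Q = ∑ b ∈ Finset.range B, A b)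
    (Sig : ℕ → ℝ → (Fin d → ℂ))
    (hSig : ∀ K x, Sig K x =
      ∑ w ∈ Finset.univ.filter
          (fun w : Fin K → Fin B =>
            (∑ i : Fin K, ((w i : ℕ) : ℝ) / (B : ℝ) ^ ((i : ℕ) + 1)) ≤ x),
        ((List.ofFn fun i => A (w i)).prod) *ᵥ C)
    (x : ℝ) (hx : x ∈ Set.Ico (0 : ℝ) 1)
    (x₁ : ℕ) (hx₁ : (x₁ : ℤ) = ⌊(B : ℝ) * x⌋)
    (K : ℕ) :
    Sig (K + 1) x =
      (∑ b ∈ Finset.range x₁, (A b * Q ^ K) *ᵥ C)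
        + A x₁ *ᵥ Sig K ((B : ℝ) * x - x₁) := by
  obtain rfl : Sig = partialSum B A C := funext₂ hSig
  have hx₁_le : (x₁ : ℝ) ≤ B * x := by exact_mod_cast hx₁ ▸ Int.floor_le ((B : ℝ) * x)
  have hlt_x₁ : B * x < x₁ + 1 := by exact_mod_cast hx₁ ▸ Int.lt_floor_add_one ((B : ℝ) * x)
  have hx₁B : x₁ < B := by
    have : (B : ℝ) * x < B := mul_lt_of_lt_one_right (by positivity) hx.2
    exact_mod_cast hx₁_le.trans_lt this
  have h_high : ∀ b ∈ Finset.Ico (x₁ + 1) B, A b *ᵥ partialSum B A C K (B * x - b) = 0 := by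
    intro b hb
    have hb' : (x₁ : ℝ) + 1 ≤ b := by exact_mod_cast (Finset.mem_Ico.mp hb).1
    rw [partialSum_of_neg A C (by linarith), Matrix.mulVec_zero]
  have h_low : ∀ b ∈ Finset.range x₁,
      A b *ᵥ partialSum B A C K (B * x - b) = (A b * Q ^ K) *ᵥ C := by
    intro b hb
    have hb' : (b : ℝ) + 1 ≤ x₁ := by exact_mod_cast Finset.mem_range.mp hb
    rw [partialSum_of_one_le A C (by linarith), ← hQ, Matrix.mulVec_mulVec]
  rw [partialSum_succ A C (by omega),
    Fin.sum_univ_eq_sum_range (fun b => A b *ᵥ partialSum B A C K (B * x - b)),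
    ← Finset.sum_range_add_sum_Ico _ hx₁B, Finset.sum_range_succ, Finset.sum_eq_zero h_high,
    Finset.sum_congr rfl h_low, add_zero]
end

section
/- Suppose the d×d complex matrices A_0,...,A_{B−1} satisfy ‖A_b‖ ≤ r for all b (in some subordinate matrix norm), and let V be an eigenvector of Q = A_0 + ... + A_{B−1} with eigenvalue λ satisfying |λ| < r. Define Σ_K(x) = Σ_{|w|=K, .w ≤ x} A_w V for x ∈ [0,1]. Then sup_{x∈[0,1]} ‖Σ_K(x)‖ = O(r^K) as K → ∞. -/
/-!
Splitting off the first digit gives `Σ_{K+1}(x) = ∑_b A_b Σ_K(Bx - b)`. Since `.w ∈ [0, 1]`,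
`Σ_K(y)` vanishes for `y < 0` and equals `Q^K V = λ^K V` for `y ≥ 1`, while at most one shift
`Bx - b` lies in `[0, 1)`. Hence `‖Σ_{K+1}‖_∞ ≤ B r |λ|^K ‖V‖ + r ‖Σ_K‖_∞`, and since `|λ| < r`
this recursion gives `‖Σ_K‖_∞ = O(r^K)`.
-/

open Matrix

theorem Fintype.sum_fin_succ_pi {α M : Type*} [Fintype α] [AddCommMonoid M] {K : ℕ}
    (f : (Fin (K + 1) → α) → M) :
    ∑ w, f w = ∑ b, ∑ w : Fin K → α, f (Fin.cons b w) := by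
  rw [← (Fin.consEquiv fun _ => α).sum_comp, Fintype.sum_prod_type]
  rfl

theorem List.prod_ofFn_cons {M α : Type*} [Monoid M] {K : ℕ} (f : α → M) (b : α)
    (w : Fin K → α) :
    (List.ofFn fun i => f (Fin.cons (α := fun _ => α) b w i)).prod =
      f b * (List.ofFn fun i => f (w i)).prod := by
  simp [List.ofFn_succ]

theorem sum_prod_ofFn_eq_pow {R ι : Type*} [Semiring R] [Fintype ι] (f : ι → R) (K : ℕ) :
    ∑ w : Fin K → ι, (List.ofFn fun i => f (w i)).prod = (∑ b, f b) ^ K := by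
  induction K with
  | zero => simp
  | succ K ih =>
    simp only [Fintype.sum_fin_succ_pi, List.prod_ofFn_cons, ← Finset.mul_sum, ih,
      ← Finset.sum_mul, pow_succ']

/-- The paper's `.w`. -/
noncomputable def radixValue {B K : ℕ} (w : Fin K → Fin B) : ℝ :=
  ∑ i : Fin K, ((w i : ℕ) : ℝ) / (B : ℝ) ^ ((i : ℕ) + 1)

section radixValue

variable {B K : ℕ}

theorem radixValue_nonneg (w : Fin K → Fin B) : 0 ≤ radixValue w := by
  unfold radixValue; positivity

theorem radixValue_cons (b : Fin B) (w : Fin K → Fin B) :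
    radixValue (Fin.cons b w : Fin (K + 1) → Fin B) = (b + radixValue w) / B := by
  have hB : (B : ℝ) ≠ 0 := by exact_mod_cast b.pos.ne'
  simp only [radixValue, Fin.sum_univ_succ, Fin.cons_zero, Fin.cons_succ, Fin.val_succ,
    Fin.val_zero, add_div, Finset.sum_div, pow_succ]
  congr 1
  · simp
  · refine Finset.sum_congr rfl fun i _ => ?_
    field_simp

theorem radixValue_le_one (w : Fin K → Fin B) : radixValue w ≤ 1 := by
  induction K with
  | zero => simp [radixValue]
  | succ K ih =>
    induction w using Fin.consCases with
    | cons b w =>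
      have hB : (0 : ℝ) < B := by exact_mod_cast b.pos
      have hb : (b : ℝ) + 1 ≤ B := by exact_mod_cast b.isLt
      rw [radixValue_cons, div_le_one hB]
      linarith [ih w]

theorem radixValue_cons_le_iff (b : Fin B) (w : Fin K → Fin B) (x : ℝ) :
    radixValue (Fin.cons b w : Fin (K + 1) → Fin B) ≤ x ↔ radixValue w ≤ B * x - b := by
  have hB : (0 : ℝ) < B := by exact_mod_cast b.pos
  rw [radixValue_cons, div_le_iff₀ hB, le_sub_iff_add_le', mul_comm]

end radixValue

theorem Matrix.pow_mulVec_of_mulVec_eq_smul {R n : Type*} [CommSemiring R] [Fintype n]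
    [DecidableEq n] {Q : Matrix n n R} {V : n → R} {lam : R} (h : Q *ᵥ V = lam • V) (K : ℕ) :
    Q ^ K *ᵥ V = lam ^ K • V := by
  induction K with
  | zero => simp
  | succ K ih => rw [pow_succ', ← mulVec_mulVec, ih, mulVec_smul, h, smul_smul, ← pow_succ]

/-- The paper's `Σ_K(x)`. -/
noncomputable def partialSum {R n : Type*} [Semiring R] [Fintype n] [DecidableEq n] {B : ℕ}
    (A : Fin B → Matrix n n R) (V : n → R) (K : ℕ) (x : ℝ) : n → R :=
  ∑ w ∈ Finset.univ.filter (fun w : Fin K → Fin B => radixValue w ≤ x),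
    (List.ofFn fun i => A (w i)).prod *ᵥ V

section partialSum

variable {R n : Type*} [Semiring R] [Fintype n] [DecidableEq n] {B : ℕ}
  (A : Fin B → Matrix n n R) (V : n → R) (K : ℕ) {x : ℝ}

theorem partialSum_of_neg (hx : x < 0) : partialSum A V K x = 0 := by
  refine Finset.sum_eq_zero fun w hw => absurd (Finset.mem_filter.mp hw).2 ?_
  exact not_le.mpr (hx.trans_le (radixValue_nonneg w))

theorem partialSum_of_one_le (hx : 1 ≤ x) :
    partialSum A V K x = (∑ b, A b) ^ K *ᵥ V := by
  rw [partialSum, Finset.filter_true_of_mem fun w _ => (radixValue_le_one w).trans hx,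
    ← sum_mulVec, sum_prod_ofFn_eq_pow]

theorem partialSum_zero_of_nonneg (hx : 0 ≤ x) : partialSum A V 0 x = V := by
  simp [partialSum, radixValue, hx]

theorem partialSum_succ (x : ℝ) :
    partialSum A V (K + 1) x = ∑ b, A b *ᵥ partialSum A V K (B * x - b) := by
  simp only [partialSum, Finset.sum_filter, Fintype.sum_fin_succ_pi, radixValue_cons_le_iff,
    mulVec_sum, List.prod_ofFn_cons, ← mulVec_mulVec]
  refine Finset.sum_congr rfl fun b _ => Finset.sum_congr rfl fun w _ => ?_
  split_ifs <;> simp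

end partialSum

theorem norm_sum_shift_le {E : Type*} [SeminormedAddCommGroup E] {B : ℕ} (T : Fin B → E → E)
    (F : ℝ → E) {r m t : ℝ} (hT : ∀ b v, ‖T b v‖ ≤ r * ‖v‖) (hr : 0 ≤ r)
    (hout : ∀ y ∉ Set.Ico (0 : ℝ) 1, ‖F y‖ ≤ m) (ht : ∀ y, ‖F y‖ ≤ t) (y : ℝ) :
    ‖∑ b, T b (F (y - b))‖ ≤ B * (r * m) + r * t := by
  classical
  set S := Finset.univ.filter fun b : Fin B => y - b ∈ Set.Ico (0 : ℝ) 1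
  have hS : S.card ≤ 1 := by
    have hfloor : ∀ b ∈ S, (b : ℕ) = ⌊y⌋₊ := fun b hb => by
      obtain ⟨h0, h1⟩ := (Finset.mem_filter.mp hb).2
      exact ((Nat.floor_eq_iff (by linarith [b.val.cast_nonneg (α := ℝ)])).mpr
        ⟨by linarith, by linarith⟩).symm
    exact Finset.card_le_one.mpr fun a ha b hb => Fin.ext ((hfloor a ha).trans (hfloor b hb).symm)
  have hm : 0 ≤ m := (norm_nonneg _).trans (hout (-1) (by simp))
  have hterm : ∀ b, ‖T b (F (y - b))‖ ≤ r * m + if b ∈ S then r * t else 0 := fun b => by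
    refine (hT b _).trans ?_
    split_ifs with hb
    · nlinarith [ht (y - b), norm_nonneg (F (y - b))]
    · have hb' : y - b ∉ Set.Ico (0 : ℝ) 1 := fun h => hb (Finset.mem_filter.mpr ⟨by simp, h⟩)
      nlinarith [hout _ hb']
  calc ‖∑ b, T b (F (y - b))‖ ≤ ∑ b, (r * m + if b ∈ S then r * t else 0) :=
        (norm_sum_le _ _).trans (Finset.sum_le_sum fun b _ => hterm b)
    _ = B * (r * m) + S.card * (r * t) := by
        rw [Finset.sum_add_distrib, Finset.sum_ite_mem, Finset.univ_inter]
        simp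
    _ ≤ B * (r * m) + r * t := by
        have : 0 ≤ r * t := mul_nonneg hr ((norm_nonneg _).trans (ht 0))
        exact add_le_add_right (mul_le_of_le_one_left this (Nat.cast_le_one.mpr hS)) _

theorem le_mul_pow_of_le_add_mul {α : Type*} {f : ℕ → α → ℝ} {s a L r : ℝ} (ha : 0 ≤ a)
    (hL : 0 ≤ L) (hLr : L < r) (h0 : ∀ x, f 0 x ≤ s)
    (hstep : ∀ K t, (∀ x, f K x ≤ t) → ∀ x, f (K + 1) x ≤ a * L ^ K + r * t) (K : ℕ) (x : α) :
    f K x ≤ (s + a / (r - L)) * r ^ K := by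
  have hrL : 0 < r - L := sub_pos.mpr hLr
  -- the correction term `a L^K / (r - L)` makes the induction close with an exact identity
  have key : ∀ K x, f K x ≤ (s + a / (r - L)) * r ^ K - a / (r - L) * L ^ K := by
    intro K
    induction K with
    | zero => simpa using h0
    | succ K ih =>
      refine fun x => (hstep K _ ih x).trans_eq ?_
      field_simp
      ring
  have : 0 ≤ a / (r - L) * L ^ K := by positivity
  linarith [key K x]

theorem sigma_bigO_general
    (B d : ℕ)
    (A : Fin B → Matrix (Fin d) (Fin d) ℂ) (r : ℝ)
    (hA : ∀ b, ‖Matrix.toEuclideanCLM (𝕜 := ℂ) (A b)‖ ≤ r)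
    (Q : Matrix (Fin d) (Fin d) ℂ) (hQ : Q = ∑ b : Fin B, A b)
    (V : Fin d → ℂ)
    (lam : ℂ) (heig : Q *ᵥ V = lam • V) (hlam : ‖lam‖ < r)
    (Sig : ℕ → ℝ → (Fin d → ℂ))
    (hSig : ∀ K x, Sig K x =
      ∑ w ∈ Finset.univ.filter
          (fun w : Fin K → Fin B =>
            (∑ i : Fin K, ((w i : ℕ) : ℝ) / (B : ℝ) ^ ((i : ℕ) + 1)) ≤ x),
        ((List.ofFn fun i => A (w i)).prod) *ᵥ V) :
    ∃ c : ℝ, ∀ K : ℕ, ∀ x ∈ Set.Icc (0 : ℝ) 1,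
      ‖(WithLp.equiv 2 (Fin d → ℂ)).symm (Sig K x)‖ ≤ c * r ^ K := by
  obtain rfl : Sig = partialSum A V := funext₂ hSig
  subst hQ
  have hr : 0 ≤ r := (norm_nonneg lam).trans hlam.le
  set v := WithLp.toLp 2 V
  have hout : ∀ K, ∀ y ∉ Set.Ico (0 : ℝ) 1,
      ‖WithLp.toLp 2 (partialSum A V K y)‖ ≤ ‖lam‖ ^ K * ‖v‖ := by
    intro K y hy
    rcases not_and_or.mp hy with hy | hy
    · rw [partialSum_of_neg A V K (not_le.mp hy), WithLp.toLp_zero, norm_zero]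
      positivity
    · rw [partialSum_of_one_le A V K (not_lt.mp hy), pow_mulVec_of_mulVec_eq_smul heig,
        WithLp.toLp_smul, norm_smul, norm_pow]
  refine ⟨‖v‖ + B * r * ‖v‖ / (r - ‖lam‖), fun K x _ => ?_⟩
  refine le_mul_pow_of_le_add_mul (f := fun K x => ‖WithLp.toLp 2 (partialSum A V K x)‖)
    (by positivity) (norm_nonneg lam) hlam (fun x => ?_) (fun K t ht x => ?_) K x
  · rcases lt_or_ge x 0 with hx | hx
    · simp only [partialSum_of_neg A V 0 hx, WithLp.toLp_zero, norm_zero]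
      positivity
    · rw [partialSum_zero_of_nonneg A V hx]
  · have hT : ∀ b u, ‖toEuclideanCLM (𝕜 := ℂ) (A b) u‖ ≤ r * ‖u‖ := fun b u =>
      ((toEuclideanCLM (𝕜 := ℂ) (A b)).le_opNorm u).trans
        (mul_le_mul_of_nonneg_right (hA b) (norm_nonneg u))
    simp only [partialSum_succ, WithLp.toLp_sum, ← toEuclideanCLM_toLp]
    exact (norm_sum_shift_le _ _ hT hr (hout K) ht _).trans_eq (by ring)

/-- if `‖A_b‖ ≤ r` in the operator norm subordinate to the
Euclidean vector norm, and `V` is an eigenvector of `Q = ∑ A_b` for an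
eigenvalue `λ` with `|λ| < r`, then `sup_{x∈[0,1]} ‖Σ_K(x)‖ = O(r^K)`. -/
theorem sigma_bigO
    (B d : ℕ) (hB : 2 ≤ B)
    (A : Fin B → Matrix (Fin d) (Fin d) ℂ) (r : ℝ)
    (hA : ∀ b, ‖Matrix.toEuclideanCLM (𝕜 := ℂ) (A b)‖ ≤ r)
    (Q : Matrix (Fin d) (Fin d) ℂ) (hQ : Q = ∑ b : Fin B, A b)
    (V : Fin d → ℂ) (hV : V ≠ 0)
    (lam : ℂ) (heig : Q *ᵥ V = lam • V) (hlam : ‖lam‖ < r)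
    (Sig : ℕ → ℝ → (Fin d → ℂ))
    (hSig : ∀ K x, Sig K x =
      ∑ w ∈ Finset.univ.filter
          (fun w : Fin K → Fin B =>
            (∑ i : Fin K, ((w i : ℕ) : ℝ) / (B : ℝ) ^ ((i : ℕ) + 1)) ≤ x),
        ((List.ofFn fun i => A (w i)).prod) *ᵥ V) :
    ∃ c : ℝ, ∀ K : ℕ, ∀ x ∈ Set.Icc (0 : ℝ) 1,
      ‖(WithLp.equiv 2 (Fin d → ℂ)).symm (Sig K x)‖ ≤ c * r ^ K :=
  sigma_bigO_general B d A r hA Q hQ V lam heig hlam Sig hSig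
end

section
/- For the dichopile representation with B = 2 and 6×6 matrices A_0, A_1 (given explicitly, both with {0,1} entries), the maximum over all words w of length T of the maximum-absolute-column-sum norm ‖A_w‖_1 equals T + 1 for every T ≥ 1. Consequently the joint spectral radius of {A_0, A_1} equals 1. -/
open Matrix

/-- The two matrices of the dichopile linear representation. -/
def dichoA : Fin 2 → Matrix (Fin 6) (Fin 6) ℝ
  | 0 => !![0,0,0,0,0,0; 1,0,0,1,0,0; 0,0,1,0,0,0; 0,1,0,0,0,0; 0,0,0,0,1,0; 1,1,0,0,0,1]
  | 1 => !![0,0,1,0,0,0; 0,1,0,0,0,0; 1,0,0,1,0,0; 0,0,0,0,0,0; 1,0,0,0,1,1; 0,1,0,0,0,0]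

/-- Maximum absolute column sum norm of a matrix. -/
noncomputable def colSumNorm (M : Matrix (Fin 6) (Fin 6) ℝ) : ℝ :=
  Finset.univ.sup' Finset.univ_nonempty fun j => ∑ i : Fin 6, |M i j|

/-- Maximum of `‖A_w‖₁` over all words of length `T`. -/
noncomputable def dichoMax (T : ℕ) : ℝ :=
  Finset.univ.sup' Finset.univ_nonempty
    fun w : Fin T → Fin 2 => colSumNorm (List.ofFn fun i => dichoA (w i)).prod

/-!
All entries of `A_0` and `A_1` are nonnegative, so `‖A_w‖₁` is the largest entry of the row vector
`s_w = 𝟙 A_w` of column sums, and `s_{wc} = s_w A_c`. Along this recursion the last two entries of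
`s_w` stay equal to `1` while every other entry is either copied or replaced by the sum of one entry
and a `1`; hence all entries of `s_w` are at most `|w| + 1`. The word `1^T` attains the bound in
column `1`. Finally `(T + 1)^(1/T) → 1`.
-/

open Filter Topology

lemma dichoA_nonneg (c : Fin 2) (i j : Fin 6) : 0 ≤ dichoA c i j := by
  fin_cases c <;> fin_cases i <;> fin_cases j <;> norm_num [dichoA]

lemma vecMul_dichoA_zero (v : Fin 6 → ℝ) :
    v ᵥ* dichoA 0 = ![v 1 + v 5, v 3 + v 5, v 2, v 1, v 4, v 5] := by
  ext j; fin_cases j <;> simp [vecMul, dotProduct, Fin.sum_univ_six, dichoA]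

lemma vecMul_dichoA_one (v : Fin 6 → ℝ) :
    v ᵥ* dichoA 1 = ![v 2 + v 4, v 1 + v 5, v 0, v 2, v 4, v 4] := by
  ext j; fin_cases j <;> simp [vecMul, dotProduct, Fin.sum_univ_six, dichoA]

lemma colSumNorm_eq_sup'_vecMul {M : Matrix (Fin 6) (Fin 6) ℝ} (hM : ∀ i j, 0 ≤ M i j) :
    colSumNorm M = Finset.univ.sup' Finset.univ_nonempty (1 ᵥ* M) := by
  refine Finset.sup'_congr _ rfl fun j _ => ?_
  simp [vecMul, dotProduct, abs_of_nonneg (hM _ j)]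

lemma Matrix.list_prod_apply_nonneg {n R : Type*} [Fintype n] [DecidableEq n] [Semiring R]
    [PartialOrder R] [IsOrderedRing R] {l : List (Matrix n n R)}
    (hl : ∀ M ∈ l, ∀ i j, 0 ≤ M i j) (i j : n) : 0 ≤ l.prod i j := by
  refine List.prod_induction (fun M : Matrix n n R => ∀ i j, 0 ≤ M i j) ?_ ?_ hl i j
  · intro M N hM hN i j
    rw [mul_apply]
    exact Finset.sum_nonneg fun k _ => mul_nonneg (hM i k) (hN k j)
  · intro i j
    rw [one_apply]
    split_ifs <;> simp

noncomputable def dichoProd (w : List (Fin 2)) : Matrix (Fin 6) (Fin 6) ℝ := (w.map dichoA).prod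

lemma dichoProd_nonneg (w : List (Fin 2)) (i j : Fin 6) : 0 ≤ dichoProd w i j := by
  refine Matrix.list_prod_apply_nonneg (fun M hM => ?_) i j
  obtain ⟨c, -, rfl⟩ := List.mem_map.mp hM
  exact dichoA_nonneg c

lemma vecMul_dichoProd_append_singleton (v : Fin 6 → ℝ) (w : List (Fin 2)) (c : Fin 2) :
    v ᵥ* dichoProd (w ++ [c]) = v ᵥ* dichoProd w ᵥ* dichoA c := by
  simp [dichoProd, vecMul_vecMul]

def ColSumInvariant (n : ℕ) (s : Fin 6 → ℝ) : Prop :=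
  s 4 = 1 ∧ s 5 = 1 ∧ ∀ j, s j ≤ n + 1

lemma ColSumInvariant.vecMul_dichoA {n : ℕ} {s : Fin 6 → ℝ} (hs : ColSumInvariant n s)
    (c : Fin 2) : ColSumInvariant (n + 1) (s ᵥ* dichoA c) := by
  obtain ⟨h4, h5, hle⟩ := hs
  have h0 := hle 0; have h1 := hle 1; have h2 := hle 2; have h3 := hle 3
  match c with
  | 0 =>
    rw [vecMul_dichoA_zero]
    refine ⟨h4, h5, fun j => ?_⟩
    fin_cases j <;> simp <;> linarith
  | 1 =>
    rw [vecMul_dichoA_one]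
    refine ⟨h4, h4, fun j => ?_⟩
    fin_cases j <;> simp <;> linarith

lemma colSumInvariant_dichoProd (w : List (Fin 2)) :
    ColSumInvariant w.length (1 ᵥ* dichoProd w) := by
  induction w using List.reverseRecOn with
  | nil => simp [ColSumInvariant, dichoProd]
  | append_singleton w c ih =>
    rw [vecMul_dichoProd_append_singleton, List.length_append, List.length_singleton]
    exact ih.vecMul_dichoA c

lemma vecMul_dichoProd_replicate_one (T : ℕ) :
    (1 ᵥ* dichoProd (List.replicate T 1)) 1 = T + 1 := by
  induction T with
  | zero => simp [dichoProd]
  | succ T ih =>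
    have h5 := (colSumInvariant_dichoProd (List.replicate T 1)).2.1
    rw [List.replicate_succ', vecMul_dichoProd_append_singleton, vecMul_dichoA_one]
    simp [ih, h5]

lemma colSumNorm_dichoProd_le (w : List (Fin 2)) : colSumNorm (dichoProd w) ≤ w.length + 1 := by
  rw [colSumNorm_eq_sup'_vecMul (dichoProd_nonneg w)]
  exact Finset.sup'_le _ _ fun j _ => (colSumInvariant_dichoProd w).2.2 j

lemma colSumNorm_dichoProd_replicate_one (T : ℕ) :
    (T : ℝ) + 1 ≤ colSumNorm (dichoProd (List.replicate T 1)) := by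
  rw [colSumNorm_eq_sup'_vecMul (dichoProd_nonneg _), ← vecMul_dichoProd_replicate_one T]
  exact Finset.le_sup' _ (Finset.mem_univ 1)

lemma dichoMax_eq (T : ℕ) : dichoMax T = T + 1 := by
  have hword (w : Fin T → Fin 2) :
      (List.ofFn fun i => dichoA (w i)).prod = dichoProd (List.ofFn w) := by
    rw [dichoProd, List.map_ofFn]; rfl
  refine le_antisymm (Finset.sup'_le _ _ fun w _ => ?_) ?_
  · simpa [hword] using colSumNorm_dichoProd_le (List.ofFn w)
  · refine le_trans ?_ (Finset.le_sup' _ (Finset.mem_univ fun _ => 1))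
    rw [hword, List.ofFn_const]
    exact colSumNorm_dichoProd_replicate_one T

lemma tendsto_natCast_add_one_rpow_one_div :
    Tendsto (fun T : ℕ => ((T : ℝ) + 1) ^ ((1 : ℝ) / T)) atTop (𝓝 1) := by
  have h := (tendsto_rpow_div_mul_add 1 1 (-1) one_ne_zero.symm).comp
    (tendsto_atTop_add_const_right atTop 1 tendsto_natCast_atTop_atTop)
  refine h.congr fun T => ?_
  simp

/-- `max_{|w|=T} ‖A_w‖₁ = T + 1` for every `T ≥ 1`, and
consequently the joint spectral radius of `{A_0, A_1}` equals `1`. -/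
theorem dichopile_max_norm_and_jsr :
    (∀ T : ℕ, 1 ≤ T → dichoMax T = T + 1) ∧
    Filter.Tendsto (fun T : ℕ => dichoMax T ^ ((1 : ℝ) / T))
      Filter.atTop (nhds 1) := by
  refine ⟨fun T _ => dichoMax_eq T, ?_⟩
  simpa only [dichoMax_eq] using tendsto_natCast_add_one_rpow_one_div
end

section
/- The unique continuous solution g_1 of the component system arising from the dichopile dilation equation satisfies g_1(x) = 0 for 0 ≤ x ≤ 1/2 and g_1(x) = (x − 1/2)/3 for 1/2 ≤ x ≤ 1. That is, the piecewise function so defined satisfies g_1(x) = (1/2)·g_3(2x − 1) together with the companion equations for g_2, g_3, g_4 where g_2(x) = (1/2)g_1(2x) + (1/2)g_4(2x) + (1/2)g_2(2x−1), g_3(x) = (1/2)g_3(2x) + (1/2)g_1(2x−1) + (1/2)g_4(2x−1), g_4(x) = (1/2)g_2(2x), with appropriate explicit piecewise-affine solutions, verified by substitution. -/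
/-- Extension of a function on `[0,1]`: `0` to the left of `0`, its value at `1`
to the right of `1`. -/
noncomputable def extBC (h : ℝ → ℝ) (y : ℝ) : ℝ :=
  if y ≤ 0 then 0 else if 1 ≤ y then h 1 else h y

/-- Explicit candidate for `g₁`: `0` on `[0,1/2]`, `(x−1/2)/3` on `[1/2,1]`. -/
noncomputable def dg1 (x : ℝ) : ℝ := max 0 (x - 1/2) / 3

/-- Explicit candidate for `g₂`. -/
noncomputable def dg2 (x : ℝ) : ℝ := x / 3

/-- Explicit candidate for `g₃`. -/
noncomputable def dg3 (x : ℝ) : ℝ := x / 3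

/-- Explicit candidate for `g₄`. -/
noncomputable def dg4 (x : ℝ) : ℝ := min x (1/2) / 3

set_option maxHeartbeats 4000000 in
/-- the explicit piecewise-affine functions `g₁,…,g₄`
(`g₁ = 0` on `[0,1/2]`, `g₁(x) = (x−1/2)/3` on `[1/2,1]`, etc.) satisfy, on `[0,1]`,
the component system of the dichopile dilation equation, where `g_i(2x)` and
`g_i(2x−1)` are understood with the extension by `0` on the left and by the
value at `1` on the right. -/
theorem dichopile_g1_to_g4_explicit :
    ∀ x ∈ Set.Icc (0 : ℝ) 1,
      dg1 x = (1/2) * extBC dg3 (2*x - 1) ∧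
      dg2 x = (1/2) * extBC dg1 (2*x) + (1/2) * extBC dg4 (2*x)
                + (1/2) * extBC dg2 (2*x - 1) ∧
      dg3 x = (1/2) * extBC dg3 (2*x) + (1/2) * extBC dg1 (2*x - 1)
                + (1/2) * extBC dg4 (2*x - 1) ∧
      dg4 x = (1/2) * extBC dg2 (2*x) := by
  rintro x ⟨h0, h1⟩
  simp only [extBC, dg1, dg2, dg3, dg4, max_def, min_def]
  refine ⟨?_, ?_, ?_, ?_⟩ <;> split_ifs <;> norm_num <;> linarith
end

section
/- Define g_6 on [0,1] by g_6(0) = 0, g_6(x) = x/3 + 1/2 for 1/2 ≤ x ≤ 1, and g_6(x) = (k+2)x/3 + 1/(3·2^k) for 1/2^{k+1} ≤ x ≤ 1/2^k with k ≥ 1. Then g_6 is continuous on [0,1] and satisfies g_6(x) = (1/2)g_1(2x) + (1/2)g_2(2x) + (1/2)g_6(2x) + (1/2)g_2(2x−1) for all x in [0,1], where g_1 and g_2 are the explicit piecewise-affine functions g_1(x) = max(0, x − 1/2)/3 and g_2(x) = x/3 on [0,1], all functions being extended by 0 for x ≤ 0 and by their value at 1 for x ≥ 1. -/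
/-- The function `g₆`, defined piecewise: `g₆(0)=0`, `g₆(x)=x/3+1/2` on `[1/2,1]`,
and `g₆(x) = (k+2)x/3 + 1/(3·2^k)` on `[1/2^(k+1), 1/2^k]` for `k ≥ 1`. -/
noncomputable def dg6 (x : ℝ) : ℝ :=
  if x ≤ 0 then 0
  else if (1:ℝ)/2 ≤ x then x/3 + 1/2
  else ((⌊Real.logb 2 x⁻¹⌋ : ℝ) + 2) * x / 3 + 1 / (3 * (2:ℝ) ^ ⌊Real.logb 2 x⁻¹⌋)

open Set

theorem Real.floor_logb_eq_of_pow_le_of_lt {b y : ℝ} {k : ℕ} (hb : 1 < b) (h₁ : b ^ k ≤ y)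
    (h₂ : y < b ^ (k + 1)) : ⌊Real.logb b y⌋ = k := by
  have hy : 0 < y := lt_of_lt_of_le (by positivity) h₁
  rw [Int.floor_eq_iff, Real.le_logb_iff_rpow_le hb hy, Real.logb_lt_iff_lt_rpow hb hy,
    Int.cast_natCast, ← Nat.cast_succ, Real.rpow_natCast, Real.rpow_natCast]
  exact ⟨h₁, h₂⟩

noncomputable def dyadicSum (x : ℝ) : ℝ := ∑' n : ℕ, min x ((1/2:ℝ) ^ n)

lemma summable_min_half_pow {x : ℝ} (hx : 0 ≤ x) :
    Summable fun n : ℕ ↦ min x ((1/2:ℝ) ^ n) :=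
  summable_geometric_two.of_nonneg_of_le (fun _ ↦ le_min hx (by positivity))
    (fun _ ↦ min_le_right _ _)

lemma dyadicSum_zero : dyadicSum 0 = 0 := by
  simp [dyadicSum]

lemma dyadicSum_of_one_le {x : ℝ} (hx : 1 ≤ x) : dyadicSum x = 2 := by
  have h (n : ℕ) : min x ((1/2:ℝ) ^ n) = (1/2) ^ n :=
    min_eq_right (le_trans (pow_le_one₀ (by norm_num) (by norm_num)) hx)
  simp only [dyadicSum, h, tsum_geometric_two]

lemma dyadicSum_eq_min_add {x : ℝ} (hx : 0 ≤ x) :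
    dyadicSum x = min x 1 + dyadicSum (2 * x) / 2 := by
  have h (n : ℕ) : min (2 * x) ((1/2:ℝ) ^ n) / 2 = min x ((1/2:ℝ) ^ (n + 1)) := by
    rw [pow_succ, ← min_div_div_right (by norm_num : (0:ℝ) ≤ 2)]
    congr 1 <;> ring
  rw [dyadicSum, (summable_min_half_pow hx).tsum_eq_zero_add, dyadicSum, ← tsum_div_const]
  simp only [h, pow_zero]

lemma dyadicSum_eq {x : ℝ} (k : ℕ) (h₁ : (1:ℝ) / 2 ^ (k + 1) ≤ x) (h₂ : x ≤ 1 / 2 ^ k) :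
    dyadicSum x = (k + 1) * x + 1 / 2 ^ k := by
  have hx : 0 ≤ x := le_trans (by positivity) h₁
  induction k generalizing x with
  | zero =>
    rw [dyadicSum_eq_min_add hx, dyadicSum_of_one_le (by norm_num at h₁; linarith),
      min_eq_left (by simpa using h₂)]
    norm_num
  | succ k ih =>
    have h2x := ih (x := 2 * x) (by rw [pow_succ] at h₁; field_simp at h₁ ⊢; linarith)
      (by rw [pow_succ] at h₂; field_simp at h₂ ⊢; linarith) (by positivity)
    have hx1 : x ≤ 1 :=
      h₂.trans (by rw [one_div]; exact inv_le_one_of_one_le₀ (one_le_pow₀ one_le_two))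
    rw [dyadicSum_eq_min_add hx, h2x, min_eq_left hx1, pow_succ]
    push_cast
    field_simp
    ring

lemma continuousOn_dyadicSum : ContinuousOn dyadicSum (Ici 0) :=
  continuousOn_tsum (fun _ ↦ (continuous_id.min continuous_const).continuousOn)
    summable_geometric_two
    fun _ x hx ↦ by
      rw [Real.norm_of_nonneg (le_min hx (by positivity))]
      exact min_le_right _ _

lemma dg6_zero : dg6 0 = 0 := by simp [dg6]

lemma dg6_of_half_le {x : ℝ} (hx : 1 / 2 ≤ x) : dg6 x = x / 3 + 1 / 2 := by
  rw [dg6, if_neg (by linarith), if_pos hx]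

lemma dg6_of_pow_le_inv_lt {x : ℝ} {k : ℕ} (h₀ : 0 < x) (hx : x < 1 / 2)
    (h₁ : (2:ℝ) ^ k ≤ x⁻¹) (h₂ : x⁻¹ < 2 ^ (k + 1)) :
    dg6 x = (k + 2) * x / 3 + 1 / (3 * 2 ^ k) := by
  rw [dg6, if_neg h₀.not_ge, if_neg hx.not_ge,
    Real.floor_logb_eq_of_pow_le_of_lt one_lt_two h₁ h₂]
  norm_cast

lemma dg6_eq_dyadicSum {x : ℝ} (hx : x ∈ Icc (0:ℝ) 1) :
    dg6 x = (dyadicSum x + min x (1 / 2)) / 3 := by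
  obtain ⟨hx₀, hx₁⟩ := hx
  rcases hx₀.eq_or_lt with rfl | hpos
  · simp [dg6_zero, dyadicSum_zero]
  rcases le_or_gt (1 / 2) x with hhalf | hhalf
  · rw [dg6_of_half_le hhalf, dyadicSum_eq 0 (by simpa using hhalf) (by simpa using hx₁),
      min_eq_right hhalf]
    ring
  · obtain ⟨k, h₁, h₂⟩ := exists_nat_pow_near (one_le_inv₀ hpos |>.mpr hx₁) one_lt_two
    have hl : (1:ℝ) / 2 ^ (k + 1) ≤ x := by
      rw [one_div]; exact ((inv_lt_comm₀ hpos (by positivity)).mp h₂).le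
    have hr : x ≤ 1 / 2 ^ k := by
      rw [one_div]; exact (le_inv_comm₀ (by positivity) hpos).mp h₁
    rw [dg6_of_pow_le_inv_lt hpos hhalf h₁ h₂, dyadicSum_eq k hl hr, min_eq_left hhalf.le]
    field_simp
    ring

lemma dg6_eq_of_mem_Icc (k : ℕ) (hk : 1 ≤ k) {x : ℝ}
    (hx : x ∈ Icc ((1:ℝ) / 2 ^ (k + 1)) (1 / 2 ^ k)) :
    dg6 x = (k + 2) * x / 3 + 1 / (3 * 2 ^ k) := by
  have hhalf : x ≤ 1 / 2 :=
    hx.2.trans (one_div_le_one_div_of_le two_pos (le_self_pow₀ one_le_two (by omega)))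
  rw [dg6_eq_dyadicSum ⟨le_trans (by positivity) hx.1, by linarith⟩, dyadicSum_eq k hx.1 hx.2,
    min_eq_left hhalf]
  field_simp
  ring

lemma continuousOn_dg6 : ContinuousOn dg6 (Icc 0 1) :=
  (((continuousOn_dyadicSum.mono Icc_subset_Ici_self).add
    (continuous_id.min continuous_const).continuousOn).div_const 3).congr
    fun _ hx ↦ dg6_eq_dyadicSum hx

lemma dg6_functional_eq_of_le_half {x : ℝ} (h₀ : 0 ≤ x) (h : x ≤ 1 / 2) :
    dg6 x = 1 / 2 * dg1 (2 * x) + 1 / 2 * dg2 (2 * x) + 1 / 2 * dg6 (2 * x) := by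
  have hsplit : max 0 (2 * x - 1 / 2) + min (2 * x) (1 / 2) = 2 * x := by
    rcases le_total (2 * x) (1 / 2) with h | h
    · rw [max_eq_left (by linarith), min_eq_left h]; ring
    · rw [max_eq_right (by linarith), min_eq_right h]; ring
  rw [dg6_eq_dyadicSum ⟨h₀, by linarith⟩, dg6_eq_dyadicSum ⟨by linarith, by linarith⟩,
    dyadicSum_eq_min_add h₀, min_eq_left (by linarith), min_eq_left (by linarith), dg1, dg2]
  linarith

lemma extBC_of_nonpos (h : ℝ → ℝ) {y : ℝ} (hy : y ≤ 0) : extBC h y = 0 := if_pos hy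

lemma extBC_of_one_le (h : ℝ → ℝ) {y : ℝ} (hy : 1 ≤ y) : extBC h y = h 1 := by
  rw [extBC, if_neg (by linarith), if_pos hy]

lemma extBC_of_mem_Icc {h : ℝ → ℝ} (h0 : h 0 = 0) {y : ℝ} (hy : y ∈ Icc 0 1) :
    extBC h y = h y := by
  unfold extBC
  split_ifs with hy₀ hy₁
  · rw [le_antisymm hy₀ hy.1, h0]
  · rw [le_antisymm hy.2 hy₁]
  · rfl

/-- `g₆` has the announced piecewise-affine form, is continuous on
`[0,1]`, and satisfies
`g₆(x) = ½g₁(2x) + ½g₂(2x) + ½g₆(2x) + ½g₂(2x−1)` on `[0,1]`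
(with the extension convention). -/
theorem dichopile_g6 :
    dg6 0 = 0 ∧
    (∀ x ∈ Set.Icc ((1:ℝ)/2) 1, dg6 x = x/3 + 1/2) ∧
    (∀ k : ℕ, 1 ≤ k → ∀ x ∈ Set.Icc ((1:ℝ)/2^(k+1)) ((1:ℝ)/2^k),
      dg6 x = ((k:ℝ) + 2) * x / 3 + 1 / (3 * 2^k)) ∧
    ContinuousOn dg6 (Set.Icc 0 1) ∧
    (∀ x ∈ Set.Icc (0:ℝ) 1,
      dg6 x = (1/2) * extBC dg1 (2*x) + (1/2) * extBC dg2 (2*x)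
        + (1/2) * extBC dg6 (2*x) + (1/2) * extBC dg2 (2*x - 1)) := by
  refine ⟨dg6_zero, fun x hx ↦ dg6_of_half_le hx.1, fun k hk x hx ↦ dg6_eq_of_mem_Icc k hk hx,
    continuousOn_dg6, fun x ⟨h₀, h₁⟩ ↦ ?_⟩
  have dg1_zero : dg1 0 = 0 := by norm_num [dg1]
  have dg2_zero : dg2 0 = 0 := by norm_num [dg2]
  rcases le_total x (1 / 2) with h | h
  · have h2x : 2 * x ∈ Icc (0:ℝ) 1 := ⟨by linarith, by linarith⟩
    rw [extBC_of_mem_Icc dg1_zero h2x, extBC_of_mem_Icc dg2_zero h2x,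
      extBC_of_mem_Icc dg6_zero h2x, extBC_of_nonpos _ (by linarith),
      dg6_functional_eq_of_le_half h₀ h]
    ring
  · rw [extBC_of_one_le _ (by linarith), extBC_of_one_le _ (by linarith),
      extBC_of_one_le _ (by linarith), extBC_of_mem_Icc dg2_zero ⟨by linarith, by linarith⟩,
      dg6_of_half_le h, dg6_of_half_le (by norm_num), dg1, dg2, dg2]
    norm_num
    ring
end

section
/- Let B ≥ 2, let A_0,...,A_{B−1} be d×d complex matrices, Q their sum, J the ν×ν Jordan cell with eigenvalue λ ≠ 0, and F: ℝ → ℂ^{d×ν} continuous with F(x) = 0 for x ≤ 0, F(x) = V for x ≥ 1 (Q·V = V·J), satisfying F(x)·J = Σ_b A_b·F(Bx − b). Assume that B^ℓ·λ is not an eigenvalue of Q for any ℓ ≥ 1. Then the moments M_ℓ = ∫_0^1 F(z) z^{ℓ−1} dz satisfy the recursion B^ℓ·M_ℓ·J − Q·M_ℓ = (1/ℓ)·Σ_{b=0}^{B−2} (B^ℓ − (b+1)^ℓ)·A_b·V + Σ_{k=1}^{ℓ−1} binomial(ℓ−1, k−1)·(Σ_{r=0}^{B−1} r^{ℓ−k}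 A_r)·M_k, and this recursion determines all M_ℓ uniquely. -/
/-!
Multiply the dilation equation by `z^(ℓ-1)` and integrate over `[0, 1]`. The substitution
`y = B z - b` turns the `b`-th term into an integral over `[-b, B - b]`, where `F` vanishes left
of `0` and equals `V` right of `1`: what remains is `∫₀¹ F(y) (y + b)^(ℓ-1) dy`, which the binomial
theorem expands into the lower moments, plus an explicit multiple of `V`. The top-order terms add
up to `Q M_ℓ`.

The difference `E` of two solutions of the recursion satisfies `B^ℓ E J = Q E` at the first index
where they differ. Going through the columns of `E` from left to right, each column `e` whose left
neighbour vanishes satisfies `(B^ℓ λ - Q) e = 0`, hence vanishes.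
-/

open Matrix intervalIntegral

/-- The `ν×ν` upper-triangular Jordan cell with eigenvalue `lam`. -/
def jordanCell (ν : ℕ) (lam : ℂ) : Matrix (Fin ν) (Fin ν) ℂ :=
  Matrix.of fun i j => if i = j then lam else if (j : ℕ) = (i : ℕ) + 1 then 1 else 0

/-- The moment recursion
`B^ℓ M_ℓ J − Q M_ℓ = (1/ℓ)Σ_{b=0}^{B−2}(B^ℓ−(b+1)^ℓ)A_bV
 + Σ_{k=1}^{ℓ−1} C(ℓ−1,k−1)(Σ_r r^{ℓ−k}A_r)M_k`. -/
def MomentRec (B d ν : ℕ) (A : ℕ → Matrix (Fin d) (Fin d) ℂ)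
    (Q : Matrix (Fin d) (Fin d) ℂ) (J : Matrix (Fin ν) (Fin ν) ℂ)
    (V : Matrix (Fin d) (Fin ν) ℂ) (M : ℕ → Matrix (Fin d) (Fin ν) ℂ)
    (ℓ : ℕ) : Prop :=
  (B : ℂ) ^ ℓ • (M ℓ * J) - Q * M ℓ =
    ((1 : ℂ) / ℓ) • (∑ b ∈ Finset.range (B - 1),
        ((B : ℂ) ^ ℓ - ((b : ℂ) + 1) ^ ℓ) • (A b * V))
    + ∑ k ∈ Finset.Icc 1 (ℓ - 1),
        (((ℓ - 1).choose (k - 1) : ℂ)) •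
          ((∑ r ∈ Finset.range B, ((r : ℂ)) ^ (ℓ - k) • A r) * M k)

theorem integral_ofReal_add_pow (a c b : ℝ) (n : ℕ) :
    ∫ y in a..c, ((y + b : ℝ) : ℂ) ^ n =
      (((c + b) ^ (n + 1) - (a + b) ^ (n + 1)) / (n + 1) : ℝ) := by
  simp only [← Complex.ofReal_pow, intervalIntegral.integral_ofReal,
    intervalIntegral.integral_comp_add_right (fun y => y ^ n), integral_pow]

theorem integral_comp_mul_sub_mul_pow {g : ℝ → ℂ} (hg : Continuous g) {v : ℂ}
    (hg0 : ∀ x ≤ 0, g x = 0) (hg1 : ∀ x ≥ 1, g x = v) {B b : ℝ} (hb : 0 ≤ b)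
    (hbB : b + 1 ≤ B) (n : ℕ) :
    ∫ z in (0:ℝ)..1, g (B * z - b) * (z : ℂ) ^ n =
      ((B : ℂ) ^ (n + 1))⁻¹ * ((∫ y in (0:ℝ)..1, g y * ((y + b : ℝ) : ℂ) ^ n) +
        v * (((B ^ (n + 1) - (b + 1) ^ (n + 1)) / (n + 1) : ℝ) : ℂ)) := by
  have hB : B ≠ 0 := by linarith
  set h : ℝ → ℂ := fun y => g y * ((y + b : ℝ) : ℂ) ^ n with h_def
  have hh : Continuous h := hg.mul (by fun_prop)
  have hsubst : ∀ z : ℝ, g (B * z - b) * (z : ℂ) ^ n = ((B : ℂ) ^ n)⁻¹ * h (B * z - b) := by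
    intro z
    have hBn : (B : ℂ) ^ n ≠ 0 := by exact_mod_cast pow_ne_zero n hB
    simp only [h_def, sub_add_cancel, Complex.ofReal_mul, mul_pow]
    field_simp
  have hleft : ∫ y in -b..0, h y = 0 := by
    refine intervalIntegral.integral_zero_ae (Filter.Eventually.of_forall fun y hy => ?_)
    rw [Set.uIoc_of_le (by linarith)] at hy
    simp [h_def, hg0 y hy.2]
  have hright : ∫ y in (1:ℝ)..B - b, h y = v * ∫ y in (1:ℝ)..B - b, ((y + b : ℝ) : ℂ) ^ n := by
    rw [← intervalIntegral.integral_const_mul]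
    refine intervalIntegral.integral_congr fun y hy => ?_
    rw [Set.uIcc_of_le (by linarith)] at hy
    simp [h_def, hg1 y hy.1]
  calc ∫ z in (0:ℝ)..1, g (B * z - b) * (z : ℂ) ^ n
      = ((B : ℂ) ^ n)⁻¹ * (B⁻¹ • ∫ y in -b..B - b, h y) := by
        simp only [hsubst, intervalIntegral.integral_const_mul,
          intervalIntegral.integral_comp_mul_sub h hB]
        norm_num
    _ = _ := by
        rw [← intervalIntegral.integral_add_adjacent_intervals (b := 0)
            (hh.intervalIntegrable _ _) (hh.intervalIntegrable _ _),
          ← intervalIntegral.integral_add_adjacent_intervals (a := 0) (b := 1)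
            (hh.intervalIntegrable _ _) (hh.intervalIntegrable _ _),
          hleft, hright, integral_ofReal_add_pow, Complex.real_smul]
        simp only [sub_add_cancel, add_comm 1 b, zero_add, pow_succ, mul_inv, Complex.ofReal_inv]
        ring

theorem integral_mul_ofReal_add_pow {g : ℝ → ℂ} (hg : Continuous g) (a c b : ℝ) (n : ℕ) :
    ∫ y in a..c, g y * ((y + b : ℝ) : ℂ) ^ n =
      ∑ k ∈ Finset.range (n + 1),
        ((n.choose k : ℂ) * (b : ℂ) ^ (n - k)) * ∫ y in a..c, g y * (y : ℂ) ^ k := by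
  have hexpand : ∀ y : ℝ, g y * ((y + b : ℝ) : ℂ) ^ n =
      ∑ k ∈ Finset.range (n + 1), ((n.choose k : ℂ) * (b : ℂ) ^ (n - k)) * (g y * (y : ℂ) ^ k) := by
    intro y
    rw [Complex.ofReal_add, add_pow, Finset.mul_sum]
    exact Finset.sum_congr rfl fun k _ => by ring
  simp only [hexpand]
  rw [intervalIntegral.integral_finsetSum fun k _ => by
    exact (continuous_const.mul (hg.mul (by fun_prop))).intervalIntegrable _ _]
  simp only [intervalIntegral.integral_const_mul]

section Moment

variable {l m n : Type*}

-- `moment F k` is the paper's `M_{k+1}`.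
noncomputable def moment (F : ℝ → Matrix m n ℂ) (k : ℕ) : Matrix m n ℂ :=
  Matrix.of fun i j => ∫ z in (0:ℝ)..1, F z i j * (z : ℂ) ^ k

theorem intervalIntegrable_apply_mul_pow {F : ℝ → Matrix m n ℂ} (hF : Continuous F) (i : m)
    (j : n) (k : ℕ) (a c : ℝ) :
    IntervalIntegrable (fun z => F z i j * (z : ℂ) ^ k) MeasureTheory.volume a c :=
  ((hF.matrix_elem i j).mul (by fun_prop)).intervalIntegrable _ _

theorem moment_mul_const [Fintype n] {F : ℝ → Matrix m n ℂ} (hF : Continuous F) (J : Matrix n l ℂ)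
    (k : ℕ) : moment (fun z => F z * J) k = moment F k * J := by
  ext i j
  simp only [moment, Matrix.of_apply, Matrix.mul_apply, Finset.sum_mul,
    ← intervalIntegral.integral_mul_const]
  rw [← intervalIntegral.integral_finsetSum fun t _ =>
    (intervalIntegrable_apply_mul_pow hF i t k 0 1).mul_const (J t j)]
  exact intervalIntegral.integral_congr fun z _ => Finset.sum_congr rfl fun t _ => by ring

theorem moment_const_mul [Fintype m] {F : ℝ → Matrix m n ℂ} (hF : Continuous F) (A : Matrix l m ℂ)
    (k : ℕ) : moment (fun z => A * F z) k = A * moment F k := by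
  ext i j
  simp only [moment, Matrix.of_apply, Matrix.mul_apply, Finset.sum_mul,
    ← intervalIntegral.integral_const_mul]
  rw [← intervalIntegral.integral_finsetSum fun t _ =>
    (intervalIntegrable_apply_mul_pow hF t j k 0 1).const_mul (A i t)]
  exact intervalIntegral.integral_congr fun z _ => Finset.sum_congr rfl fun t _ => by ring

theorem moment_finset_sum {ι : Type*} (s : Finset ι) {F : ι → ℝ → Matrix m n ℂ}
    (hF : ∀ b ∈ s, Continuous (F b)) (k : ℕ) :
    moment (fun z => ∑ b ∈ s, F b z) k = ∑ b ∈ s, moment (F b) k := by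
  ext i j
  simp only [moment, Matrix.of_apply, Matrix.sum_apply, Finset.sum_mul]
  exact intervalIntegral.integral_finsetSum fun b hb =>
    intervalIntegrable_apply_mul_pow (hF b hb) i j k 0 1

theorem moment_comp_mul_sub {F : ℝ → Matrix m n ℂ} (hF : Continuous F) {V : Matrix m n ℂ}
    (hF0 : ∀ x ≤ 0, F x = 0) (hF1 : ∀ x ≥ 1, F x = V) {B b : ℝ} (hb : 0 ≤ b)
    (hbB : b + 1 ≤ B) (k : ℕ) :
    moment (fun z => F (B * z - b)) k =
      ((B : ℂ) ^ (k + 1))⁻¹ • (∑ i ∈ Finset.range (k + 1),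
          ((k.choose i : ℂ) * (b : ℂ) ^ (k - i)) • moment F i +
        (((B ^ (k + 1) - (b + 1) ^ (k + 1)) / (k + 1) : ℝ) : ℂ) • V) := by
  ext i j
  have hentry := integral_comp_mul_sub_mul_pow (hF.matrix_elem i j)
    (fun x hx => by rw [hF0 x hx, Matrix.zero_apply]) (fun x hx => by rw [hF1 x hx]) hb hbB k
  simp only [moment, Matrix.of_apply, hentry, integral_mul_ofReal_add_pow (hF.matrix_elem i j),
    Matrix.smul_apply, Matrix.add_apply, Matrix.sum_apply, smul_eq_mul]
  ring

end Moment

theorem pow_smul_moment_mul_of_dilation {m n : Type*} [Fintype m] [Fintype n] {B : ℕ}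
    {A : ℕ → Matrix m m ℂ} {J : Matrix n n ℂ} {V : Matrix m n ℂ} {F : ℝ → Matrix m n ℂ}
    (hF : Continuous F) (hF0 : ∀ x ≤ 0, F x = 0) (hF1 : ∀ x ≥ 1, F x = V)
    (hdil : ∀ x : ℝ, F x * J = ∑ b ∈ Finset.range B, A b * F (B * x - b)) (k : ℕ) :
    (B : ℂ) ^ (k + 1) • (moment F k * J) =
      ∑ b ∈ Finset.range B, A b * (∑ i ∈ Finset.range (k + 1),
          ((k.choose i : ℂ) * (b : ℂ) ^ (k - i)) • moment F i +
        (((B : ℂ) ^ (k + 1) - ((b : ℂ) + 1) ^ (k + 1)) / (k + 1)) • V) := by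
  have hcomp : ∀ b : ℕ, Continuous fun x : ℝ => F (B * x - b) := fun b => hF.comp (by fun_prop)
  rw [← moment_mul_const hF, funext hdil,
    moment_finset_sum _ fun b _ => continuous_const.matrix_mul (hcomp b), Finset.smul_sum]
  refine Finset.sum_congr rfl fun b hb => ?_
  have hbB : (b : ℝ) + 1 ≤ B := by exact_mod_cast Finset.mem_range.mp hb
  have hB : (B : ℂ) ^ (k + 1) ≠ 0 :=
    pow_ne_zero _ (Nat.cast_ne_zero.mpr (Finset.nonempty_range_iff.mp ⟨b, hb⟩))
  rw [moment_const_mul (hcomp b), moment_comp_mul_sub hF hF0 hF1 b.cast_nonneg hbB,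
    Matrix.mul_smul, smul_smul]
  push_cast
  rw [mul_inv_cancel₀ hB, one_smul]

theorem momentRec_of_pow_smul_eq {B d ν : ℕ} (hB : 1 ≤ B) {A : ℕ → Matrix (Fin d) (Fin d) ℂ}
    {Q : Matrix (Fin d) (Fin d) ℂ} (hQ : Q = ∑ b ∈ Finset.range B, A b)
    {J : Matrix (Fin ν) (Fin ν) ℂ} {V : Matrix (Fin d) (Fin ν) ℂ}
    {M : ℕ → Matrix (Fin d) (Fin ν) ℂ} (k : ℕ)
    (h : (B : ℂ) ^ (k + 1) • (M (k + 1) * J) =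
      ∑ b ∈ Finset.range B, A b * (∑ i ∈ Finset.range (k + 1),
          ((k.choose i : ℂ) * (b : ℂ) ^ (k - i)) • M (i + 1) +
        (((B : ℂ) ^ (k + 1) - ((b : ℂ) + 1) ^ (k + 1)) / (k + 1)) • V)) :
    MomentRec B d ν A Q J V M (k + 1) := by
  have hV : ∑ b ∈ Finset.range B,
        A b * ((((B : ℂ) ^ (k + 1) - ((b : ℂ) + 1) ^ (k + 1)) / (k + 1)) • V) =
      ((1 : ℂ) / (k + 1 : ℕ)) • ∑ b ∈ Finset.range (B - 1),
        ((B : ℂ) ^ (k + 1) - ((b : ℂ) + 1) ^ (k + 1)) • (A b * V) := by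
    obtain ⟨B, rfl⟩ : ∃ B', B = B' + 1 := ⟨B - 1, by omega⟩
    rw [Finset.sum_range_succ, Nat.add_sub_cancel, Finset.smul_sum]
    push_cast
    rw [sub_self, zero_div, zero_smul, Matrix.mul_zero, add_zero]
    refine Finset.sum_congr rfl fun b _ => ?_
    rw [Matrix.mul_smul, smul_smul, div_eq_inv_mul, one_div, mul_comm]
  have hM : ∑ b ∈ Finset.range B, A b * ∑ i ∈ Finset.range k,
        ((k.choose i : ℂ) * (b : ℂ) ^ (k - i)) • M (i + 1) =
      ∑ i ∈ Finset.Icc 1 k, ((k.choose (i - 1) : ℂ)) •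
        ((∑ r ∈ Finset.range B, (r : ℂ) ^ (k + 1 - i) • A r) * M i) := by
    rw [← Finset.Ico_add_one_right_eq_Icc, Finset.sum_Ico_eq_sum_range, Nat.add_sub_cancel]
    simp only [Matrix.mul_sum, Finset.sum_comm (s := Finset.range B), Matrix.sum_mul,
      Finset.smul_sum]
    refine Finset.sum_congr rfl fun i _ => Finset.sum_congr rfl fun b _ => ?_
    rw [Nat.add_sub_cancel_left, show k + 1 - (1 + i) = k - i by omega, Matrix.mul_smul,
      Matrix.smul_mul, smul_smul, mul_comm, add_comm 1 i]
  rw [MomentRec, h, hQ, Matrix.sum_mul]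
  simp only [Finset.sum_range_succ _ k, Nat.choose_self, Nat.sub_self, pow_zero, Nat.cast_one,
    mul_one, one_smul, Matrix.mul_add, Finset.sum_add_distrib, hV, ← hM, Nat.add_sub_cancel]
  abel

theorem mul_jordanCell_apply_of_apply_eq_zero {m : Type*} {ν : ℕ} (lam : ℂ)
    {E : Matrix m (Fin ν) ℂ} {j : Fin ν}
    (hprev : ∀ (i : m) (t : Fin ν), (j : ℕ) = t + 1 → E i t = 0)
    (i : m) : (E * jordanCell ν lam) i j = lam * E i j := by
  rw [Matrix.mul_apply, Finset.sum_eq_single j]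
  · simp [jordanCell, mul_comm]
  · intro t _ htj
    by_cases hsucc : (j : ℕ) = t + 1
    · rw [hprev i t hsucc, zero_mul]
    · simp [jordanCell, htj, hsucc]
  · simp

theorem eq_zero_of_smul_mul_jordanCell_sub_mul_eq_zero {m : Type*} [Fintype m] [DecidableEq m]
    {ν : ℕ} {c lam : ℂ} {Q : Matrix m m ℂ} (hdet : ((c * lam) • (1 : Matrix m m ℂ) - Q).det ≠ 0)
    {E : Matrix m (Fin ν) ℂ} (hE : c • (E * jordanCell ν lam) - Q * E = 0) : E = 0 := by
  suffices hcol : ∀ p : ℕ, ∀ j : Fin ν, (j : ℕ) < p → ∀ i, E i j = 0 by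
    ext i j
    exact hcol (j + 1) j (Nat.lt_succ_self j) i
  intro p
  induction p with
  | zero => intro j hj; omega
  | succ p ih =>
    intro j hj
    have hEJ := mul_jordanCell_apply_of_apply_eq_zero lam
      (fun i t htj => ih t (by omega) i) (E := E) (j := j)
    refine congrFun (Matrix.eq_zero_of_mulVec_eq_zero hdet (v := fun i => E i j) ?_)
    funext i
    have hentry := congrFun (congrFun hE i) j
    simp only [Matrix.sub_apply, Matrix.smul_apply, hEJ, smul_eq_mul, Matrix.zero_apply,
      Matrix.mul_apply] at hentry
    rw [Matrix.sub_mulVec, Matrix.smul_mulVec, Matrix.one_mulVec]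
    simp only [Pi.sub_apply, Pi.smul_apply, smul_eq_mul, Matrix.mulVec, dotProduct,
      Pi.zero_apply]
    linear_combination hentry

theorem eq_of_momentRec {B d ν : ℕ} {A : ℕ → Matrix (Fin d) (Fin d) ℂ}
    {Q : Matrix (Fin d) (Fin d) ℂ} {lam : ℂ}
    (heig : ∀ ℓ : ℕ, 1 ≤ ℓ →
      ((((B : ℂ) ^ ℓ * lam) • (1 : Matrix (Fin d) (Fin d) ℂ)) - Q).det ≠ 0)
    {V : Matrix (Fin d) (Fin ν) ℂ} {M M' : ℕ → Matrix (Fin d) (Fin ν) ℂ}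
    (hM : ∀ ℓ : ℕ, 1 ≤ ℓ → MomentRec B d ν A Q (jordanCell ν lam) V M ℓ)
    (hM' : ∀ ℓ : ℕ, 1 ≤ ℓ → MomentRec B d ν A Q (jordanCell ν lam) V M' ℓ) :
    ∀ ℓ : ℕ, 1 ≤ ℓ → M' ℓ = M ℓ := by
  intro ℓ
  induction ℓ using Nat.strong_induction_on with
  | _ ℓ ih =>
    intro hℓ
    have hlower : ∑ k ∈ Finset.Icc 1 (ℓ - 1), ((ℓ - 1).choose (k - 1) : ℂ) •
          ((∑ r ∈ Finset.range B, (r : ℂ) ^ (ℓ - k) • A r) * M' k) =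
        ∑ k ∈ Finset.Icc 1 (ℓ - 1), ((ℓ - 1).choose (k - 1) : ℂ) •
          ((∑ r ∈ Finset.range B, (r : ℂ) ^ (ℓ - k) • A r) * M k) :=
      Finset.sum_congr rfl fun k hk => by
        rw [ih k (by grind) (Finset.mem_Icc.mp hk).1]
    have hsame : (B : ℂ) ^ ℓ • (M' ℓ * jordanCell ν lam) - Q * M' ℓ =
        (B : ℂ) ^ ℓ • (M ℓ * jordanCell ν lam) - Q * M ℓ := by
      rw [hM' ℓ hℓ, hM ℓ hℓ, hlower]
    refine sub_eq_zero.mp (eq_zero_of_smul_mul_jordanCell_sub_mul_eq_zero (heig ℓ hℓ) ?_)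
    rw [Matrix.sub_mul, smul_sub, Matrix.mul_sub, sub_sub_sub_comm, hsame, sub_self]

theorem moments_recursion_general
    (B d ν : ℕ) (hB : 2 ≤ B)
    (A : ℕ → Matrix (Fin d) (Fin d) ℂ)
    (Q : Matrix (Fin d) (Fin d) ℂ) (hQ : Q = ∑ b ∈ Finset.range B, A b)
    (lam : ℂ)
    (heig : ∀ ℓ : ℕ, 1 ≤ ℓ →
      ((((B : ℂ) ^ ℓ * lam) • (1 : Matrix (Fin d) (Fin d) ℂ)) - Q).det ≠ 0)
    (V : Matrix (Fin d) (Fin ν) ℂ)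
    (F : ℝ → Matrix (Fin d) (Fin ν) ℂ)
    (hFc : Continuous F) (hF0 : ∀ x ≤ (0 : ℝ), F x = 0)
    (hF1 : ∀ x ≥ (1 : ℝ), F x = V)
    (hdil : ∀ x : ℝ, F x * jordanCell ν lam =
      ∑ b ∈ Finset.range B, A b * F ((B : ℝ) * x - b))
    (M : ℕ → Matrix (Fin d) (Fin ν) ℂ)
    (hM : ∀ ℓ, M ℓ = Matrix.of
      fun i j => ∫ z in (0 : ℝ)..1, F z i j * (z : ℂ) ^ (ℓ - 1)) :
    (∀ ℓ : ℕ, 1 ≤ ℓ → MomentRec B d ν A Q (jordanCell ν lam) V M ℓ) ∧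
    (∀ M' : ℕ → Matrix (Fin d) (Fin ν) ℂ,
      (∀ ℓ : ℕ, 1 ≤ ℓ → MomentRec B d ν A Q (jordanCell ν lam) V M' ℓ) →
      ∀ ℓ : ℕ, 1 ≤ ℓ → M' ℓ = M ℓ) := by
  have hmoment : ∀ k, M (k + 1) = moment F k := fun k => hM (k + 1)
  have hrec : ∀ ℓ : ℕ, 1 ≤ ℓ → MomentRec B d ν A Q (jordanCell ν lam) V M ℓ := by
    intro ℓ hℓ
    obtain ⟨k, rfl⟩ : ∃ k, ℓ = k + 1 := ⟨ℓ - 1, by omega⟩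
    refine momentRec_of_pow_smul_eq (by omega) hQ k ?_
    simpa only [hmoment] using pow_smul_moment_mul_of_dilation hFc hF0 hF1 hdil k
  exact ⟨hrec, fun M' hM' => eq_of_momentRec heig hrec hM'⟩

/-- the moments `M_ℓ = ∫_0^1 F(z) z^{ℓ−1} dz` of the solution of the
dilation equation satisfy the moment recursion, and — under the hypothesis that
no `B^ℓ·λ` (`ℓ ≥ 1`) is an eigenvalue of `Q` — the recursion determines them
uniquely. -/
theorem moments_recursion
    (B d ν : ℕ) (hB : 2 ≤ B) (hν : 0 < ν)
    (A : ℕ → Matrix (Fin d) (Fin d) ℂ)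
    (Q : Matrix (Fin d) (Fin d) ℂ) (hQ : Q = ∑ b ∈ Finset.range B, A b)
    (lam : ℂ) (hlam : lam ≠ 0)
    (heig : ∀ ℓ : ℕ, 1 ≤ ℓ →
      ((((B : ℂ) ^ ℓ * lam) • (1 : Matrix (Fin d) (Fin d) ℂ)) - Q).det ≠ 0)
    (V : Matrix (Fin d) (Fin ν) ℂ) (hQV : Q * V = V * jordanCell ν lam)
    (F : ℝ → Matrix (Fin d) (Fin ν) ℂ)
    (hFc : Continuous F) (hF0 : ∀ x ≤ (0 : ℝ), F x = 0)
    (hF1 : ∀ x ≥ (1 : ℝ), F x = V)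
    (hdil : ∀ x : ℝ, F x * jordanCell ν lam =
      ∑ b ∈ Finset.range B, A b * F ((B : ℝ) * x - b))
    (M : ℕ → Matrix (Fin d) (Fin ν) ℂ)
    (hM : ∀ ℓ, M ℓ = Matrix.of
      fun i j => ∫ z in (0 : ℝ)..1, F z i j * (z : ℂ) ^ (ℓ - 1)) :
    (∀ ℓ : ℕ, 1 ≤ ℓ → MomentRec B d ν A Q (jordanCell ν lam) V M ℓ) ∧
    (∀ M' : ℕ → Matrix (Fin d) (Fin ν) ℂ,
      (∀ ℓ : ℕ, 1 ≤ ℓ → MomentRec B d ν A Q (jordanCell ν lam) V M' ℓ) →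
      ∀ ℓ : ℕ, 1 ≤ ℓ → M' ℓ = M ℓ) :=
  moments_recursion_general B d ν hB A Q hQ lam heig V F hFc hF0 hF1 hdil M hM
end

section
/- Under the hypotheses of the moment recursion, the partial moments M_{ℓ,r} = ∫_{r/B}^{(r+1)/B} F(z) z^{ℓ−1} dz for 0 ≤ r < B satisfy M_{ℓ,r}·J = Σ_{b<r} ((r+1)^ℓ − r^ℓ)/(ℓ·B^ℓ) · A_b·V + B^{−ℓ}·Σ_{k=1}^{ℓ} binomial(ℓ−1, k−1)·r^{ℓ−k}·A_r·M_k, and since J is invertible, the partial moments are determined by the full moments M_1,...,M_ℓ. -/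
/-!
On the piece `[r/B, (r+1)/B]` the dilation equation collapses: the terms with `b < r` see
`F = V`, those with `b > r` see `F = 0`, so `F(x) J = Σ_{b<r} A_b V + A_r F(Bx − r)` there.
Multiplying by `x^{ℓ−1}` and integrating, the constant part is an elementary power integral,
while the substitution `y = Bx − r` and the binomial expansion of `((y + r)/B)^{ℓ−1}` turn the
rest into a combination of the full moments `A_r M_k`. Uniqueness is cancellation of `J`, whose
determinant is `λ^ν`.
-/

open Matrix intervalIntegral

open Finset

theorem jordanCell_det (ν : ℕ) (lam : ℂ) : (jordanCell ν lam).det = lam ^ ν := by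
  rw [det_of_isUpperTriangular]
  · simp [jordanCell]
  · intro i j hji
    have hji : j < i := hji
    simp only [jordanCell, of_apply]
    rw [if_neg hji.ne', if_neg (by omega)]

theorem isUnit_jordanCell_det {lam : ℂ} (hlam : lam ≠ 0) (ν : ℕ) :
    IsUnit (jordanCell ν lam).det := by
  rw [jordanCell_det]
  exact (pow_ne_zero ν hlam).isUnit

theorem sum_mul_comp_sub_of_mem_Icc {R m n : Type*} [Semiring R] [Fintype m]
    (A : ℕ → Matrix m m R) {F : ℝ → Matrix m n R} {V : Matrix m n R}
    (hF0 : ∀ x ≤ (0 : ℝ), F x = 0) (hF1 : ∀ x ≥ (1 : ℝ), F x = V)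
    {B r : ℕ} (hr : r < B) {x : ℝ} (hx : x ∈ Set.Icc (r : ℝ) (r + 1)) :
    ∑ b ∈ range B, A b * F (x - b) = ∑ b ∈ range r, A b * V + A r * F (x - r) := by
  have h_right : ∑ b ∈ Ico (r + 1) B, A b * F (x - b) = 0 := by
    refine sum_eq_zero fun b hb => ?_
    have hb : (r : ℝ) + 1 ≤ b := by exact_mod_cast (mem_Ico.mp hb).1
    rw [hF0 _ (by linarith [hx.2]), Matrix.mul_zero]
  have h_left : ∑ b ∈ range r, A b * F (x - b) = ∑ b ∈ range r, A b * V := by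
    refine sum_congr rfl fun b hb => ?_
    have hb : (b : ℝ) + 1 ≤ r := by exact_mod_cast mem_range.mp hb
    rw [hF1 _ (by linarith [hx.1])]
  rw [← sum_range_add_sum_Ico _ hr, h_right, add_zero, sum_range_succ, h_left]

theorem integral_mul_add_pow {g : ℝ → ℂ} (hg : Continuous g) (s : ℂ) (n : ℕ) :
    ∫ y in (0 : ℝ)..1, g y * ((y : ℂ) + s) ^ n =
      ∑ t ∈ range (n + 1), (n.choose t * s ^ (n - t)) * ∫ y in (0 : ℝ)..1, g y * (y : ℂ) ^ t := by
  simp_rw [add_pow, mul_sum]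
  rw [integral_finsetSum fun t _ => (by fun_prop : Continuous _).intervalIntegrable _ _]
  refine sum_congr rfl fun t _ => ?_
  rw [← integral_const_mul]
  congr 1; ext y; ring

section IntervalMoment

variable {l m n : Type*}

/-- Taken entrywise, since `Matrix` carries no normed-space instance. The paper's `M_ℓ` and
`M_{ℓ,r}` are `intervalMoment F 0 1 (ℓ-1)` and `intervalMoment F (r/B) ((r+1)/B) (ℓ-1)`. -/
noncomputable def intervalMoment (G : ℝ → Matrix m n ℂ) (a b : ℝ) (k : ℕ) : Matrix m n ℂ :=
  of fun i j => ∫ z in a..b, G z i j * (z : ℂ) ^ k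

variable {G H : ℝ → Matrix m n ℂ} {a b : ℝ} {k : ℕ}

theorem intervalIntegrable_entry_mul_pow (hG : Continuous G) (i : m) (j : n) (k : ℕ) :
    IntervalIntegrable (fun z => G z i j * (z : ℂ) ^ k) MeasureTheory.volume a b :=
  ((hG.matrix_elem i j).mul (Complex.continuous_ofReal.pow k)).intervalIntegrable a b

theorem intervalMoment_congr (h : Set.EqOn G H (Set.uIcc a b)) :
    intervalMoment G a b k = intervalMoment H a b k :=
  ext fun i j => integral_congr fun z hz => by simp only [h hz]

theorem intervalMoment_add (hG : Continuous G) (hH : Continuous H) :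
    intervalMoment (fun z => G z + H z) a b k = intervalMoment G a b k + intervalMoment H a b k :=
  ext fun i j => by
    simp only [intervalMoment, of_apply, Matrix.add_apply, add_mul]
    exact integral_add (intervalIntegrable_entry_mul_pow hG i j k)
      (intervalIntegrable_entry_mul_pow hH i j k)

theorem intervalMoment_const (C : Matrix m n ℂ) :
    intervalMoment (fun _ => C) a b k = (∫ z in a..b, (z : ℂ) ^ k) • C :=
  ext fun i j => by simp [intervalMoment, integral_const_mul, mul_comm]

theorem intervalMoment_mul [Fintype n] (hG : Continuous G) (Y : Matrix n l ℂ) :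
    intervalMoment G a b k * Y = intervalMoment (fun z => G z * Y) a b k :=
  ext fun i j => calc
    ∑ c, (∫ z in a..b, G z i c * (z : ℂ) ^ k) * Y c j
      = ∑ c, ∫ z in a..b, G z i c * (z : ℂ) ^ k * Y c j :=
        sum_congr rfl fun c _ => (integral_mul_const _ _).symm
    _ = ∫ z in a..b, ∑ c, G z i c * (z : ℂ) ^ k * Y c j :=
        (integral_finsetSum fun c _ => (intervalIntegrable_entry_mul_pow hG i c k).mul_const _).symm
    _ = ∫ z in a..b, (G z * Y) i j * (z : ℂ) ^ k :=
        integral_congr fun z _ => by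
          simp only [mul_apply, sum_mul]; exact sum_congr rfl fun _ _ => by ring

theorem mul_intervalMoment [Fintype m] (hG : Continuous G) (X : Matrix l m ℂ) :
    X * intervalMoment G a b k = intervalMoment (fun z => X * G z) a b k :=
  ext fun i j => calc
    ∑ c, X i c * ∫ z in a..b, G z c j * (z : ℂ) ^ k
      = ∑ c, ∫ z in a..b, X i c * (G z c j * (z : ℂ) ^ k) :=
        sum_congr rfl fun c _ => (integral_const_mul _ _).symm
    _ = ∫ z in a..b, ∑ c, X i c * (G z c j * (z : ℂ) ^ k) :=
        (integral_finsetSum fun c _ => (intervalIntegrable_entry_mul_pow hG c j k).const_mul _).symm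
    _ = ∫ z in a..b, (X * G z) i j * (z : ℂ) ^ k :=
        integral_congr fun z _ => by
          simp only [mul_apply, sum_mul]; exact sum_congr rfl fun _ _ => by ring

theorem intervalMoment_comp_mul_sub (hG : Continuous G) {c : ℝ} (hc : c ≠ 0) (s : ℝ) (n : ℕ) :
    intervalMoment (fun z => G (c * z - s)) (s / c) ((s + 1) / c) n =
      ((c : ℂ) ^ (n + 1))⁻¹ • ∑ t ∈ range (n + 1),
        (n.choose t * (s : ℂ) ^ (n - t)) • intervalMoment G 0 1 t :=
  ext fun i j => by
    have hc' : (c : ℂ) ≠ 0 := Complex.ofReal_ne_zero.mpr hc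
    have h0 : c * (s / c) - s = 0 := by field_simp; ring
    have h1 : c * ((s + 1) / c) - s = 1 := by field_simp; ring
    calc ∫ z in s / c..(s + 1) / c, G (c * z - s) i j * (z : ℂ) ^ n
        = ∫ z in s / c..(s + 1) / c,
            (fun y : ℝ => G y i j * (((y : ℂ) + s) / c) ^ n) (c * z - s) :=
          integral_congr fun z _ => by
            simp only [Complex.ofReal_sub, Complex.ofReal_mul, sub_add_cancel,
              mul_div_cancel_left₀ _ hc']
      _ = (c : ℂ)⁻¹ * ((c : ℂ) ^ n)⁻¹ * ∫ y in (0 : ℝ)..1, G y i j * ((y : ℂ) + s) ^ n := by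
          rw [integral_comp_mul_sub (fun y : ℝ => G y i j * (((y : ℂ) + s) / c) ^ n) hc s, h0, h1,
            Complex.real_smul, Complex.ofReal_inv, mul_assoc]
          congr 1
          rw [← integral_const_mul]
          refine integral_congr fun y _ => ?_
          simp only [div_pow]
          field_simp
      _ = _ := by
          rw [integral_mul_add_pow (hG.matrix_elem i j), pow_succ]
          simp [intervalMoment, Matrix.sum_apply, mul_sum, mul_comm]

end IntervalMoment

theorem intervalMoment_mul_of_dilation {ι κ : Type*} [Fintype ι] [Fintype κ]
    {A : ℕ → Matrix ι ι ℂ} {V : Matrix ι κ ℂ} {J : Matrix κ κ ℂ} {F : ℝ → Matrix ι κ ℂ}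
    (hFc : Continuous F) (hF0 : ∀ x ≤ (0 : ℝ), F x = 0) (hF1 : ∀ x ≥ (1 : ℝ), F x = V)
    {B : ℕ} (hdil : ∀ x : ℝ, F x * J = ∑ b ∈ range B, A b * F ((B : ℝ) * x - b))
    {r : ℕ} (hr : r < B) (n : ℕ) :
    intervalMoment F (r / B) ((r + 1) / B) n * J =
      ∑ b ∈ range r,
        ((((r : ℂ) + 1) ^ (n + 1) - (r : ℂ) ^ (n + 1)) / (((n + 1 : ℕ) : ℂ) * (B : ℂ) ^ (n + 1)))
          • (A b * V)
      + ((1 : ℂ) / (B : ℂ) ^ (n + 1)) •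
          ∑ t ∈ range (n + 1),
            ((n.choose t : ℂ) * (r : ℂ) ^ (n - t)) • (A r * intervalMoment F 0 1 t) := by
  have hB : (0 : ℝ) < B := Nat.cast_pos.mpr (by omega)
  have hle : (r : ℝ) / B ≤ (r + 1) / B := by gcongr; linarith
  have hpiece : Set.EqOn (fun z => F z * J)
      (fun z => ∑ b ∈ range r, A b * V + A r * F (B * z - r)) (Set.uIcc (r / B) ((r + 1) / B)) := by
    intro z hz
    rw [Set.uIcc_of_le hle, Set.mem_Icc, div_le_iff₀ hB, le_div_iff₀ hB] at hz
    exact (hdil z).trans (sum_mul_comp_sub_of_mem_Icc A hF0 hF1 hr ⟨by linarith, by linarith⟩)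
  have hpow : ∫ z in (r / B : ℝ)..((r + 1) / B), (z : ℂ) ^ n =
      (((r : ℂ) + 1) ^ (n + 1) - (r : ℂ) ^ (n + 1)) / (((n + 1 : ℕ) : ℂ) * (B : ℂ) ^ (n + 1)) := by
    simp_rw [← Complex.ofReal_pow, integral_ofReal, integral_pow]
    push_cast
    rw [div_pow, div_pow]
    field_simp
  have hshift : Continuous fun z : ℝ => F (B * z - r) := hFc.comp (by fun_prop)
  calc intervalMoment F (r / B) ((r + 1) / B) n * J
      = intervalMoment (fun z => F z * J) (r / B) ((r + 1) / B) n := intervalMoment_mul hFc J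
    _ = intervalMoment (fun z => ∑ b ∈ range r, A b * V + A r * F (B * z - r))
          (r / B) ((r + 1) / B) n := intervalMoment_congr hpiece
    _ = (∫ z in (r / B : ℝ)..((r + 1) / B), (z : ℂ) ^ n) • ∑ b ∈ range r, A b * V
          + A r * intervalMoment (fun z => F (B * z - r)) (r / B) ((r + 1) / B) n := by
      rw [intervalMoment_add continuous_const (continuous_const.matrix_mul hshift),
        intervalMoment_const, mul_intervalMoment hshift]
    _ = _ := by
      rw [intervalMoment_comp_mul_sub hFc hB.ne', hpow, smul_sum, Matrix.mul_smul, Matrix.mul_sum]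
      simp only [Matrix.mul_smul, Complex.ofReal_natCast, one_div]

theorem partial_moments_recursion_general
    (B d ν : ℕ)
    (A : ℕ → Matrix (Fin d) (Fin d) ℂ)
    (lam : ℂ) (hlam : lam ≠ 0)
    (V : Matrix (Fin d) (Fin ν) ℂ)
    (F : ℝ → Matrix (Fin d) (Fin ν) ℂ)
    (hFc : Continuous F) (hF0 : ∀ x ≤ (0 : ℝ), F x = 0)
    (hF1 : ∀ x ≥ (1 : ℝ), F x = V)
    (hdil : ∀ x : ℝ, F x * jordanCell ν lam =
      ∑ b ∈ Finset.range B, A b * F ((B : ℝ) * x - b))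
    (M : ℕ → Matrix (Fin d) (Fin ν) ℂ)
    (hM : ∀ ℓ, M ℓ = Matrix.of
      fun i j => ∫ z in (0 : ℝ)..1, F z i j * (z : ℂ) ^ (ℓ - 1))
    (Mp : ℕ → ℕ → Matrix (Fin d) (Fin ν) ℂ)
    (hMp : ∀ ℓ r, Mp ℓ r = Matrix.of
      fun i j => ∫ z in ((r : ℝ)/B)..(((r : ℝ) + 1)/B), F z i j * (z : ℂ) ^ (ℓ - 1)) :
    (∀ ℓ : ℕ, 1 ≤ ℓ → ∀ r < B,
      Mp ℓ r * jordanCell ν lam =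
        (∑ b ∈ Finset.range r,
          ((((r : ℂ) + 1) ^ ℓ - (r : ℂ) ^ ℓ) / ((ℓ : ℂ) * (B : ℂ) ^ ℓ)) • (A b * V))
        + ((1 : ℂ) / (B : ℂ) ^ ℓ) •
            ∑ k ∈ Finset.Icc 1 ℓ,
              ((((ℓ - 1).choose (k - 1) : ℂ)) * (r : ℂ) ^ (ℓ - k)) • (A r * M k)) ∧
    IsUnit (jordanCell ν lam).det ∧
    (∀ ℓ : ℕ, 1 ≤ ℓ → ∀ r < B, ∀ N : Matrix (Fin d) (Fin ν) ℂ,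
      N * jordanCell ν lam = Mp ℓ r * jordanCell ν lam → N = Mp ℓ r) := by
  have hJ := isUnit_jordanCell_det hlam ν
  refine ⟨fun ℓ hℓ r hr => ?_, hJ, fun ℓ _ r _ N hN => ?_⟩
  · obtain ⟨n, rfl⟩ := Nat.exists_eq_add_of_le' hℓ
    have hMp' : Mp (n + 1) r = intervalMoment F (r / B) ((r + 1) / B) n := hMp (n + 1) r
    have hM' : ∀ t, M (t + 1) = intervalMoment F 0 1 t := fun t => hM (t + 1)
    rw [hMp', intervalMoment_mul_of_dilation hFc hF0 hF1 hdil hr n,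
      ← Finset.Ico_add_one_right_eq_Icc, sum_Ico_eq_sum_range]
    simp only [Nat.add_comm 1, hM', Nat.add_sub_cancel, Nat.add_sub_add_right]
  · calc N = N * jordanCell ν lam * (jordanCell ν lam)⁻¹ :=
          (mul_nonsing_inv_cancel_right _ _ hJ).symm
      _ = Mp ℓ r := by rw [hN, mul_nonsing_inv_cancel_right _ _ hJ]

/-- the partial moments `M_{ℓ,r} = ∫_{r/B}^{(r+1)/B} F(z) z^{ℓ−1} dz`
satisfy
`M_{ℓ,r}·J = Σ_{b<r} ((r+1)^ℓ−r^ℓ)/(ℓB^ℓ) A_b V + B^{−ℓ} Σ_{k=1}^{ℓ} C(ℓ−1,k−1) r^{ℓ−k} A_r M_k`;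
since `J` is invertible, the partial moments are determined by the full
moments. -/
theorem partial_moments_recursion
    (B d ν : ℕ) (hB : 2 ≤ B) (hν : 0 < ν)
    (A : ℕ → Matrix (Fin d) (Fin d) ℂ)
    (Q : Matrix (Fin d) (Fin d) ℂ) (hQ : Q = ∑ b ∈ Finset.range B, A b)
    (lam : ℂ) (hlam : lam ≠ 0)
    (V : Matrix (Fin d) (Fin ν) ℂ) (hQV : Q * V = V * jordanCell ν lam)
    (F : ℝ → Matrix (Fin d) (Fin ν) ℂ)
    (hFc : Continuous F) (hF0 : ∀ x ≤ (0 : ℝ), F x = 0)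
    (hF1 : ∀ x ≥ (1 : ℝ), F x = V)
    (hdil : ∀ x : ℝ, F x * jordanCell ν lam =
      ∑ b ∈ Finset.range B, A b * F ((B : ℝ) * x - b))
    (M : ℕ → Matrix (Fin d) (Fin ν) ℂ)
    (hM : ∀ ℓ, M ℓ = Matrix.of
      fun i j => ∫ z in (0 : ℝ)..1, F z i j * (z : ℂ) ^ (ℓ - 1))
    (Mp : ℕ → ℕ → Matrix (Fin d) (Fin ν) ℂ)
    (hMp : ∀ ℓ r, Mp ℓ r = Matrix.of
      fun i j => ∫ z in ((r : ℝ)/B)..(((r : ℝ) + 1)/B), F z i j * (z : ℂ) ^ (ℓ - 1)) :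
    (∀ ℓ : ℕ, 1 ≤ ℓ → ∀ r < B,
      Mp ℓ r * jordanCell ν lam =
        (∑ b ∈ Finset.range r,
          ((((r : ℂ) + 1) ^ ℓ - (r : ℂ) ^ ℓ) / ((ℓ : ℂ) * (B : ℂ) ^ ℓ)) • (A b * V))
        + ((1 : ℂ) / (B : ℂ) ^ ℓ) •
            ∑ k ∈ Finset.Icc 1 ℓ,
              ((((ℓ - 1).choose (k - 1) : ℂ)) * (r : ℂ) ^ (ℓ - k)) • (A r * M k)) ∧
    IsUnit (jordanCell ν lam).det ∧
    (∀ ℓ : ℕ, 1 ≤ ℓ → ∀ r < B, ∀ N : Matrix (Fin d) (Fin ν) ℂ,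
      N * jordanCell ν lam = Mp ℓ r * jordanCell ν lam → N = Mp ℓ r) :=
  partial_moments_recursion_general B d ν A lam hlam V F hFc hF0 hF1 hdil M hM Mp hMp
end

section
/- Let F: ℝ → ℂ be continuous with F(x) = 0 for x ≤ 1/B and F bounded on [1/B, 1] (B ≥ 2 an integer, or more generally B > 1 real). Define F*(s) = ∫_{1/B}^{1} x^{s−1} F(x) dx. Then F* is an entire function of s, and for every complex s, F*(s) = Σ_{n=0}^{∞} binomial(s−1, n) Δ^n F*(1), where Δ is the forward difference operator in the integer argument, i.e. Δ^n F*(1) = Σ_{j=0}^{n} (−1)^{n−j} binomial(n, j) F*(1+j) = ∫_{1/B}^1 F(x)(x−1)^n dx. The series converges absolutely, at rate at least geometric with ratio 1 − 1/B. -/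
open intervalIntegral

/-- Generalized binomial coefficient `C(s−1, n) = (s−1)(s−2)⋯(s−n)/n!`. -/
noncomputable def gbinom (s : ℂ) (n : ℕ) : ℂ :=
  (∏ i ∈ Finset.range n, (s - 1 - i)) / (n.factorial : ℂ)

/-!
For `x ∈ [1/B, 1]` we have `|x - 1| ≤ 1 - 1/B < 1`, so the binomial series
`x ^ (s - 1) = ∑ C(s - 1, n) (x - 1) ^ n` converges dominatedly on the interval and can be
integrated term by term against `F`. Since `x ^ s - x ^ (s - 1) = x ^ (s - 1) (x - 1)`, the `n`-th
forward difference of `F*` is the moment `∫ F(x) (x - 1) ^ n dx = O((1 - 1/B) ^ n)`. For `|a| ≤ R`,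
`|C(a, n)| ≤ |C(-R, n)|`, the moduli of the coefficients of `(1 - z) ^ (-R)`, of radius `1`; so the
Newton series converges absolutely, geometrically and locally uniformly in `s`, and `F*` is entire.
-/

open Finset
open MeasureTheory (volume ae_of_all)

theorem Ring.choose_eq_prod_range_div {K : Type*} [Field K] [CharZero K] (a : K) (n : ℕ) :
    Ring.choose a n = (∏ i ∈ range n, (a - i)) / n.factorial := by
  rw [Ring.choose_eq_smul, ← descPochhammer_eval_eq_prod_range, div_eq_inv_mul, smul_eq_mul,
    ← Polynomial.aeval_eq_smeval, ← descPochhammer_map (algebraMap ℤ K),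
    Polynomial.eval_map_algebraMap]

theorem gbinom_eq_choose (s : ℂ) (n : ℕ) : gbinom s n = Ring.choose (s - 1) n :=
  (Ring.choose_eq_prod_range_div _ _).symm

theorem Complex.norm_choose_le_norm_choose_neg {a : ℂ} {R : ℝ} (h : ‖a‖ ≤ R) (n : ℕ) :
    ‖Ring.choose a n‖ ≤ ‖Ring.choose (-(R : ℂ)) n‖ := by
  have hR : 0 ≤ R := (norm_nonneg a).trans h
  simp only [Ring.choose_eq_prod_range_div, norm_div, norm_prod]
  gcongr with i
  calc ‖a - i‖ ≤ R + i := (norm_sub_le _ _).trans (by simpa using h)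
    _ = ‖-(R : ℂ) - i‖ := by
      rw [← neg_add', norm_neg, ← Complex.ofReal_natCast, ← Complex.ofReal_add, Complex.norm_real,
        Real.norm_of_nonneg (by positivity)]

theorem Complex.summable_norm_choose_mul_pow (a : ℂ) {ρ : ℝ} (h0 : 0 ≤ ρ) (h1 : ρ < 1) :
    Summable fun n => ‖Ring.choose a n‖ * ρ ^ n := by
  have hρ : (ρ.toNNReal : ENNReal) < (binomialSeries ℂ a).radius :=
    lt_of_lt_of_le (by simpa using h1) binomialSeries_radius_ge_one
  simpa only [binomialSeries, FormalMultilinearSeries.ofScalars_norm, Real.coe_toNNReal _ h0] using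
    (binomialSeries ℂ a).summable_norm_mul_pow hρ

theorem Complex.hasSum_choose_mul_pow (a : ℂ) {z : ℂ} (hz : ‖z‖ < 1) :
    HasSum (fun n => Ring.choose a n * z ^ n) ((1 + z) ^ a) := by
  have hz' : z ∈ Metric.eball (0 : ℂ) 1 := by
    rw [← ENNReal.coe_one, Metric.eball_coe]; simpa using hz
  have := Complex.one_add_cpow_hasFPowerSeriesOnBall_zero (a := a) |>.hasSum hz'
  simpa only [binomialSeries_apply, List.ofFn_const, List.prod_replicate, zero_add,
    smul_eq_mul] using this

theorem Complex.exists_norm_choose_mul_pow_le (a : ℂ) {q r : ℝ} (hq : 0 ≤ q) (hqr : q < r) :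
    ∃ c, ∀ n, ‖Ring.choose a n‖ * q ^ n ≤ c * r ^ n := by
  have hr : 0 < r := hq.trans_lt hqr
  have hsum := Complex.summable_norm_choose_mul_pow a (div_nonneg hq hr.le)
    ((div_lt_one hr).mpr hqr)
  refine ⟨∑' m, ‖Ring.choose a m‖ * (q / r) ^ m, fun n => ?_⟩
  calc ‖Ring.choose a n‖ * q ^ n = ‖Ring.choose a n‖ * (q / r) ^ n * r ^ n := by
        rw [div_pow, mul_assoc, div_mul_cancel₀ _ (pow_ne_zero n hr.ne')]
    _ ≤ _ := by
      gcongr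
      exact hsum.le_tsum n fun m _ => by positivity

theorem Complex.differentiable_tsum_choose_mul {d : ℕ → ℂ} {C ρ : ℝ} (hρ0 : 0 ≤ ρ) (hρ1 : ρ < 1)
    (hd : ∀ n, ‖d n‖ ≤ C * ρ ^ n) : Differentiable ℂ fun a => ∑' n, Ring.choose a n * d n := by
  intro a₀
  have hball : ∀ n, ∀ a ∈ Metric.ball a₀ 1,
      ‖Ring.choose a n * d n‖ ≤ ‖Ring.choose (-((‖a₀‖ + 1 : ℝ) : ℂ)) n‖ * ρ ^ n * C := by
    intro n a ha
    have haR : ‖a‖ ≤ ‖a₀‖ + 1 := by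
      have := norm_le_norm_add_norm_sub' a a₀
      rw [Metric.mem_ball, dist_eq_norm] at ha
      linarith
    rw [norm_mul, mul_assoc, mul_comm (ρ ^ n)]
    exact mul_le_mul (Complex.norm_choose_le_norm_choose_neg haR n) (hd n) (norm_nonneg _)
      (norm_nonneg _)
  refine (differentiableOn_tsum_of_summable_norm
    ((Complex.summable_norm_choose_mul_pow _ hρ0 hρ1).mul_right C)
    (fun n => ?_) Metric.isOpen_ball hball).differentiableAt
    (Metric.isOpen_ball.mem_nhds (Metric.mem_ball_self one_pos))
  simp only [Ring.choose_eq_prod_range_div]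
  fun_prop

section Mellin

variable {a b : ℝ} {G : ℝ → ℂ}

theorem continuousOn_ofReal_cpow_uIcc (ha : 0 < a) (hb : 0 < b) (s : ℂ) :
    ContinuousOn (fun x : ℝ => (x : ℂ) ^ s) (Set.uIcc a b) := fun x hx =>
  (Complex.continuousAt_ofReal_cpow_const x s
    (Or.inr (lt_of_lt_of_le (lt_min ha hb) hx.1).ne')).continuousWithinAt

theorem IntervalIntegrable.ofReal_cpow_mul (ha : 0 < a) (hb : 0 < b)
    (hG : IntervalIntegrable G volume a b) (s : ℂ) :
    IntervalIntegrable (fun x : ℝ => (x : ℂ) ^ s * G x) volume a b :=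
  hG.continuousOn_mul (continuousOn_ofReal_cpow_uIcc ha hb s)

theorem IntervalIntegrable.mul_ofReal_sub_one (hG : IntervalIntegrable G volume a b) :
    IntervalIntegrable (fun x : ℝ => G x * ((x : ℂ) - 1)) volume a b :=
  hG.mul_continuousOn (by fun_prop)

theorem fwdDiff_integral_ofReal_cpow_mul (ha : 0 < a) (hb : 0 < b)
    (hG : IntervalIntegrable G volume a b) :
    fwdDiff 1 (fun s : ℂ => ∫ x in a..b, (x : ℂ) ^ (s - 1) * G x) =
      fun s : ℂ => ∫ x in a..b, (x : ℂ) ^ (s - 1) * (G x * ((x : ℂ) - 1)) := by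
  funext s
  rw [fwdDiff, ← integral_sub (hG.ofReal_cpow_mul ha hb _) (hG.ofReal_cpow_mul ha hb _)]
  refine integral_congr fun x hx => ?_
  have hx0 : (x : ℂ) ≠ 0 := Complex.ofReal_ne_zero.mpr (lt_of_lt_of_le (lt_min ha hb) hx.1).ne'
  simp only [add_sub_right_comm s 1 1, Complex.cpow_add _ _ hx0, Complex.cpow_one]
  ring

theorem fwdDiff_iter_integral_ofReal_cpow_mul (ha : 0 < a) (hb : 0 < b)
    (hG : IntervalIntegrable G volume a b) (n : ℕ) :
    (fwdDiff 1)^[n] (fun s : ℂ => ∫ x in a..b, (x : ℂ) ^ (s - 1) * G x) =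
      fun s : ℂ => ∫ x in a..b, (x : ℂ) ^ (s - 1) * (G x * ((x : ℂ) - 1) ^ n) := by
  induction n generalizing G with
  | zero => simp
  | succ n ih =>
    rw [Function.iterate_succ_apply, fwdDiff_integral_ofReal_cpow_mul ha hb hG,
      ih hG.mul_ofReal_sub_one]
    simp only [mul_assoc, ← pow_succ']

theorem norm_ofReal_sub_one_le {x : ℝ} (hx : x ∈ Set.Icc a 1) : ‖(x : ℂ) - 1‖ ≤ 1 - a := by
  rw [← Complex.ofReal_one, ← Complex.ofReal_sub, Complex.norm_real, Real.norm_of_nonpos]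
  all_goals linarith [hx.1, hx.2]

theorem norm_integral_mul_ofReal_sub_one_pow_le (ha : a ≤ 1) (hG : IntervalIntegrable G volume a 1)
    (n : ℕ) : ‖∫ x in a..1, G x * ((x : ℂ) - 1) ^ n‖ ≤ (∫ x in a..1, ‖G x‖) * (1 - a) ^ n := by
  rw [← intervalIntegral.integral_mul_const]
  refine norm_integral_le_of_norm_le ha (ae_of_all _ fun x hx => ?_) (hG.norm.mul_const _)
  rw [norm_mul, norm_pow]
  gcongr
  exact norm_ofReal_sub_one_le (Set.Ioc_subset_Icc_self hx)

theorem hasSum_choose_mul_integral_mul_ofReal_sub_one_pow (ha : 0 < a) (ha1 : a ≤ 1)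
    (hG : IntervalIntegrable G volume a 1) (s : ℂ) :
    HasSum (fun n => Ring.choose (s - 1) n * ∫ x in a..1, G x * ((x : ℂ) - 1) ^ n)
      (∫ x in a..1, (x : ℂ) ^ (s - 1) * G x) := by
  have hρ0 : 0 ≤ 1 - a := by linarith
  have hρ1 : 1 - a < 1 := by linarith
  simp only [← intervalIntegral.integral_const_mul]
  refine hasSum_integral_of_dominated_convergence
    (fun n x => ‖Ring.choose (s - 1) n‖ * (1 - a) ^ n * ‖G x‖)
    (fun n => ((hG.mul_continuousOn (by fun_prop)).const_mul _).def'.aestronglyMeasurable)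
    (fun n => ae_of_all _ fun x hx => ?_)
    (ae_of_all _ fun x _ => (Complex.summable_norm_choose_mul_pow _ hρ0 hρ1).mul_right _)
    ?_ (ae_of_all _ fun x hx => ?_)
  · rw [Set.uIoc_of_le ha1] at hx
    rw [norm_mul, norm_mul, norm_pow, mul_assoc, mul_comm ‖G x‖]
    gcongr
    exact norm_ofReal_sub_one_le (Set.Ioc_subset_Icc_self hx)
  · simp only [tsum_mul_right]
    exact hG.norm.const_mul _
  · rw [Set.uIoc_of_le ha1] at hx
    have hx1 : ‖(x : ℂ) - 1‖ < 1 :=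
      (norm_ofReal_sub_one_le (Set.Ioc_subset_Icc_self hx)).trans_lt hρ1
    have := (Complex.hasSum_choose_mul_pow (s - 1) hx1).mul_right (G x)
    rw [add_sub_cancel] at this
    simpa only [mul_assoc, mul_comm (G x)] using this

end Mellin

theorem newton_series_mellin_general
    (B : ℝ) (hB : 1 < B)
    (F : ℝ → ℂ) (hFc : Continuous F)
    (Fstar : ℂ → ℂ)
    (hFstar : ∀ s, Fstar s = ∫ x in (1/B : ℝ)..1, (x : ℂ) ^ (s - 1) * F x)
    (Δ : ℕ → ℂ)
    (hΔ : ∀ n, Δ n = ∑ j ∈ Finset.range (n + 1),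
      (-1 : ℂ) ^ (n - j) * (n.choose j : ℂ) * Fstar (1 + j)) :
    Differentiable ℂ Fstar ∧
    (∀ n : ℕ, Δ n = ∫ x in (1/B : ℝ)..1, F x * ((x : ℂ) - 1) ^ n) ∧
    (∀ s : ℂ, HasSum (fun n : ℕ => gbinom s n * Δ n) (Fstar s)) ∧
    (∀ s : ℂ, Summable fun n : ℕ => ‖gbinom s n * Δ n‖) ∧
    (∀ s : ℂ, ∀ r : ℝ, 1 - 1 / B < r →
      ∃ c : ℝ, ∀ n : ℕ, ‖gbinom s n * Δ n‖ ≤ c * r ^ n) := by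
  have ha : 0 < 1 / B := by positivity
  have ha1 : 1 / B < 1 := (div_lt_one (by positivity)).mpr hB
  have hρ0 : 0 ≤ 1 - 1 / B := by linarith
  have hF : IntervalIntegrable F volume (1 / B) 1 := hFc.intervalIntegrable _ _
  have hΔ_eq (n : ℕ) : Δ n = ∫ x in (1/B : ℝ)..1, F x * ((x : ℂ) - 1) ^ n := by
    have := congrFun (fwdDiff_iter_integral_ofReal_cpow_mul ha one_pos hF n) 1
    rw [← funext hFstar, fwdDiff_iter_eq_sum_shift] at this
    simpa [hΔ, zsmul_eq_mul] using this
  have hsum (s : ℂ) : HasSum (fun n => gbinom s n * Δ n) (Fstar s) := by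
    simpa only [gbinom_eq_choose, hΔ_eq, hFstar] using
      hasSum_choose_mul_integral_mul_ofReal_sub_one_pow ha ha1.le hF s
  set I := ∫ x in (1/B : ℝ)..1, ‖F x‖
  have hI : 0 ≤ I := integral_nonneg ha1.le fun x _ => norm_nonneg _
  have hΔ_le (n : ℕ) : ‖Δ n‖ ≤ I * (1 - 1 / B) ^ n := by
    rw [hΔ_eq]
    exact norm_integral_mul_ofReal_sub_one_pow_le ha1.le hF n
  have hterm (s : ℂ) (n : ℕ) :
      ‖gbinom s n * Δ n‖ ≤ ‖Ring.choose (s - 1) n‖ * (1 - 1 / B) ^ n * I := by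
    rw [norm_mul, gbinom_eq_choose, mul_assoc, mul_comm _ I]
    gcongr
    exact hΔ_le n
  refine ⟨?_, hΔ_eq, hsum, fun s => ?_, fun s r hr => ?_⟩
  · simp only [funext fun s => (hsum s).tsum_eq.symm, gbinom_eq_choose]
    exact (Complex.differentiable_tsum_choose_mul hρ0 (by linarith) hΔ_le).comp
      (differentiable_id.sub_const 1)
  · exact .of_nonneg_of_le (fun n => norm_nonneg _) (hterm s)
      ((Complex.summable_norm_choose_mul_pow _ hρ0 (by linarith)).mul_right I)
  · obtain ⟨c, hc⟩ := Complex.exists_norm_choose_mul_pow_le (s - 1) hρ0 hr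
    exact ⟨c * I, fun n =>
      (hterm s n).trans ((mul_le_mul_of_nonneg_right (hc n) hI).trans_eq (mul_right_comm _ _ _))⟩

/-- for continuous `F` vanishing on `(−∞, 1/B]`, the Mellin-type
transform `F*(s) = ∫_{1/B}^1 x^{s−1}F(x)dx` is entire; its forward differences at
`1` are `Δⁿ F*(1) = ∫_{1/B}^1 F(x)(x−1)ⁿ dx`, the Newton series
`Σ_n C(s−1,n) Δⁿ F*(1)` converges absolutely to `F*(s)` for every `s`, at a rate
at least geometric with ratio `1 − 1/B`. -/
theorem newton_series_mellin
    (B : ℝ) (hB : 1 < B)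
    (F : ℝ → ℂ) (hFc : Continuous F) (hF0 : ∀ x ≤ 1 / B, F x = 0)
    (hFbd : ∃ Cb : ℝ, ∀ x ∈ Set.Icc (1 / B) 1, ‖F x‖ ≤ Cb)
    (Fstar : ℂ → ℂ)
    (hFstar : ∀ s, Fstar s = ∫ x in (1/B : ℝ)..1, (x : ℂ) ^ (s - 1) * F x)
    (Δ : ℕ → ℂ)
    (hΔ : ∀ n, Δ n = ∑ j ∈ Finset.range (n + 1),
      (-1 : ℂ) ^ (n - j) * (n.choose j : ℂ) * Fstar (1 + j)) :
    Differentiable ℂ Fstar ∧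
    (∀ n : ℕ, Δ n = ∫ x in (1/B : ℝ)..1, F x * ((x : ℂ) - 1) ^ n) ∧
    (∀ s : ℂ, HasSum (fun n : ℕ => gbinom s n * Δ n) (Fstar s)) ∧
    (∀ s : ℂ, Summable fun n : ℕ => ‖gbinom s n * Δ n‖) ∧
    (∀ s : ℂ, ∀ r : ℝ, 1 - 1 / B < r →
      ∃ c : ℝ, ∀ n : ℕ, ‖gbinom s n * Δ n‖ ≤ c * r ^ n) :=
  newton_series_mellin_general B hB F hFc Fstar hFstar Δ hΔ
end
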